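/- arXiv:2510.12068 — 5 statements merged into one kernel-verified Lean document; each statement's English description precedes it below -/
import Mathlib

section
/- Assume C² smooth functions (ρ, U₁, U₂, U₃, S, κ) defined on Ω satisfy ρ > 0 in Ω and the radial velocity U₁ > 0 in Ω. Then the following two statements are equivalent: (1) (ρ, u, S, κ) satisfies the cylindrical steady aligned MHD system in Ω; (2) (u, S, B, κ) satisfies: (i) the streamline transport equations (∂_r + (U₂/(rU₁))∂_θ + (U₃/U₁)∂_{x₃})(B, S, κ) = 0; (ii) the algebraic vorticity relations J₂ = (1/U₁)(U₂J₁ + ∂_{x₃}B − ((B − |U|²/2)/(γS))∂_{x₃}S − κρ|U|²∂_{x₃}κ) and J₃ = (1/U₁)(U₃J₁ − (1/r)∂_θB + ((B − |U|²/2)/(γS))(1/r)∂_θS + κρ|U|²(1/r)∂_θκ); and (iii) the deformation-curl system consisting of the scalar equation (c² − U₁²)∂_rU₁ + (c² − U₂²)(1/r)∂_θU₂ + (c² − U₃²)∂_{x₃}U₃ + c²U₁/r = U₁(U₂∂_rU₂ + U₃∂_rU₃) + U₂(U₁(1/r)∂_θU₁ + U₃(1/r)∂_θU₃) + U₃(U₁∂_{x₃}U₁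 + U₂∂_{x₃}U₂) together with the three equations expressing that curl((1−κ²ρ)u) has cylindrical components (J₁, J₂, J₃), where ρ = ((γ−1)/(γS))^{1/(γ−1)}(B − |U|²/2)^{1/(γ−1)} and c² = (γ−1)(B − |U|²/2). -/
noncomputable section

abbrev R3 : Type := ℝ × ℝ × ℝ

/-- Partial derivative in the first (radial) variable. -/
def pd1 (f : R3 → ℝ) (p : R3) : ℝ := deriv (fun s => f (s, p.2.1, p.2.2)) p.1

/-- Partial derivative in the second (angular) variable. -/
def pd2 (f : R3 → ℝ) (p : R3) : ℝ := deriv (fun s => f (p.1, s, p.2.2)) p.2.1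

/-- Partial derivative in the third (axial) variable. -/
def pd3 (f : R3 → ℝ) (p : R3) : ℝ := deriv (fun s => f (p.1, p.2.1, s)) p.2.2

/-- The cylindrical domain `Ω = (r₁,r₂) × (-θ₀,θ₀) × (-1,1)`. -/
def Cyl (r1 r2 θ0 : ℝ) : Set R3 :=
  Set.Ioo r1 r2 ×ˢ (Set.Ioo (-θ0) θ0 ×ˢ Set.Ioo (-1 : ℝ) 1)

/-- The Bernoulli quantity `B = |U|²/2 + γSρ^{γ-1}/(γ-1)`. -/
def Bern (γ : ℝ) (ρ U1 U2 U3 S : R3 → ℝ) (p : R3) : ℝ :=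
  (U1 p ^ 2 + U2 p ^ 2 + U3 p ^ 2) / 2 + γ * S p * ρ p ^ (γ - 1) / (γ - 1)

/-- The convective (streamline) derivative `(U₁∂_r + (U₂/r)∂_θ + U₃∂_{x₃})f`. -/
def convD (U1 U2 U3 f : R3 → ℝ) (p : R3) : ℝ :=
  U1 p * pd1 f p + U2 p / p.1 * pd2 f p + U3 p * pd3 f p

/-- The steady aligned MHD system (1.7) in cylindrical coordinates at `p`:
continuity, the three momentum equations with the Lorentz force of the aligned
magnetic field `h = κρu`, and the transport equations for `B` and `κ`;
here `P = Sρ^γ`. -/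
def CylMHD (γ : ℝ) (ρ U1 U2 U3 S κ : R3 → ℝ) (p : R3) : Prop :=
  (pd1 (fun q => ρ q * U1 q) p + ρ p * U1 p / p.1
      + (1 / p.1) * pd2 (fun q => ρ q * U2 q) p + pd3 (fun q => ρ q * U3 q) p = 0)
  ∧ (convD U1 U2 U3 U1 p + (1 / ρ p) * pd1 (fun q => S q * ρ q ^ γ) p - U2 p ^ 2 / p.1
      = -(κ p * U2 p) * (pd1 (fun q => κ q * ρ q * U2 q) p + κ p * ρ p * U2 p / p.1
            - (1 / p.1) * pd2 (fun q => κ q * ρ q * U1 q) p)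
        + κ p * U3 p * (pd3 (fun q => κ q * ρ q * U1 q) p
            - pd1 (fun q => κ q * ρ q * U3 q) p))
  ∧ (convD U1 U2 U3 U2 p + (1 / (p.1 * ρ p)) * pd2 (fun q => S q * ρ q ^ γ) p
        + U1 p * U2 p / p.1
      = κ p * U1 p * (pd1 (fun q => κ q * ρ q * U2 q) p + κ p * ρ p * U2 p / p.1
            - (1 / p.1) * pd2 (fun q => κ q * ρ q * U1 q) p)
        - κ p * U3 p * ((1 / p.1) * pd2 (fun q => κ q * ρ q * U3 q) p
            - pd3 (fun q => κ q * ρ q * U2 q) p))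
  ∧ (convD U1 U2 U3 U3 p + (1 / ρ p) * pd3 (fun q => S q * ρ q ^ γ) p
      = κ p * U2 p * ((1 / p.1) * pd2 (fun q => κ q * ρ q * U3 q) p
            - pd3 (fun q => κ q * ρ q * U2 q) p)
        - κ p * U1 p * (pd3 (fun q => κ q * ρ q * U1 q) p
            - pd1 (fun q => κ q * ρ q * U3 q) p))
  ∧ convD U1 U2 U3 (Bern γ ρ U1 U2 U3 S) p = 0
  ∧ convD U1 U2 U3 κ p = 0

/-- First cylindrical component of the modified vorticity `J = curl((1-κ²ρ)u)`. -/
def mJ1 (ρ U2 U3 κ : R3 → ℝ) (p : R3) : ℝ :=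
  (1 / p.1) * pd2 (fun q => (1 - κ q ^ 2 * ρ q) * U3 q) p
    - pd3 (fun q => (1 - κ q ^ 2 * ρ q) * U2 q) p

/-- Second cylindrical component of the modified vorticity. -/
def mJ2 (ρ U1 U3 κ : R3 → ℝ) (p : R3) : ℝ :=
  pd3 (fun q => (1 - κ q ^ 2 * ρ q) * U1 q) p
    - pd1 (fun q => (1 - κ q ^ 2 * ρ q) * U3 q) p

/-- Third cylindrical component of the modified vorticity. -/
def mJ3 (ρ U1 U2 κ : R3 → ℝ) (p : R3) : ℝ :=
  pd1 (fun q => (1 - κ q ^ 2 * ρ q) * U2 q) p + (1 - κ p ^ 2 * ρ p) * U2 p / p.1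
    - (1 / p.1) * pd2 (fun q => (1 - κ q ^ 2 * ρ q) * U1 q) p

/-- clearing denominators: an equation is equivalent to a cleared polynomial form -/
private lemma clear_mp {D L R P : ℝ} (hkey : D * (L - R) = P) (h : L = R) : P = 0 := by
  rw [← hkey, h, sub_self, mul_zero]

private lemma clear_mpr {D L R P : ℝ} (hD : D ≠ 0) (hkey : D * (L - R) = P)
    (hP : P = 0) : L = R := by
  have h0 : D * (L - R) = 0 := by rw [hkey, hP]
  rcases mul_eq_zero.mp h0 with h' | h'
  · exact absurd h' hD
  · exact sub_eq_zero.mp h'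

private lemma cancel_factor {c P : ℝ} (hc : c ≠ 0) (h : c * P = 0) : P = 0 := by
  rcases mul_eq_zero.mp h with h' | h'
  · exact absurd h' hc
  · exact h'

set_option maxHeartbeats 3200000
/-- Lemma 2.1 (Equivalence): for C² functions with `ρ > 0` and `U₁ > 0` on `Ω`,
the cylindrical steady aligned MHD system is equivalent to the decomposition into
(i) the streamline transport equations for `(B,S,κ)`, (ii) the algebraic relations
for the second and third components of the modified vorticity, and (iii) the
deformation-curl system (scalar deformation equation together with the equations
expressing that `curl((1-κ²ρ)u)` has cylindrical components `(J₁,J₂,J₃)`), with the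
density recovered from `ρ = ((γ-1)/(γS))^{1/(γ-1)}(B - |U|²/2)^{1/(γ-1)}` and
`c² = (γ-1)(B - |U|²/2)`. -/
theorem aligned_MHD_deformation_curl_equivalence
    (γ r1 r2 θ0 : ℝ) (hγ : 1 < γ) (hr1 : 0 < r1) (hr12 : r1 < r2)
    (hθ0 : 0 < θ0) (hθ0' : θ0 < Real.pi / 2)
    (ρ U1 U2 U3 S κ : R3 → ℝ)
    (hreg : ContDiffOn ℝ 2 ρ (Cyl r1 r2 θ0) ∧ ContDiffOn ℝ 2 U1 (Cyl r1 r2 θ0) ∧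
      ContDiffOn ℝ 2 U2 (Cyl r1 r2 θ0) ∧ ContDiffOn ℝ 2 U3 (Cyl r1 r2 θ0) ∧
      ContDiffOn ℝ 2 S (Cyl r1 r2 θ0) ∧ ContDiffOn ℝ 2 κ (Cyl r1 r2 θ0))
    (hρ : ∀ p ∈ Cyl r1 r2 θ0, 0 < ρ p) (hU1 : ∀ p ∈ Cyl r1 r2 θ0, 0 < U1 p)
    (hS : ∀ p ∈ Cyl r1 r2 θ0, 0 < S p) :
    (∀ p ∈ Cyl r1 r2 θ0, CylMHD γ ρ U1 U2 U3 S κ p) ↔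
    (∀ p ∈ Cyl r1 r2 θ0,
      -- the density is recovered from (B, S, |U|²)
      (ρ p = ((γ - 1) / (γ * S p)) ^ (1 / (γ - 1))
          * (Bern γ ρ U1 U2 U3 S p - (U1 p ^ 2 + U2 p ^ 2 + U3 p ^ 2) / 2)
              ^ (1 / (γ - 1))) ∧
      -- (i) streamline transport of B, S, κ
      (pd1 (Bern γ ρ U1 U2 U3 S) p
          + U2 p / (p.1 * U1 p) * pd2 (Bern γ ρ U1 U2 U3 S) p
          + U3 p / U1 p * pd3 (Bern γ ρ U1 U2 U3 S) p = 0) ∧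
      (pd1 S p + U2 p / (p.1 * U1 p) * pd2 S p + U3 p / U1 p * pd3 S p = 0) ∧
      (pd1 κ p + U2 p / (p.1 * U1 p) * pd2 κ p + U3 p / U1 p * pd3 κ p = 0) ∧
      -- (ii) the algebraic vorticity relations
      (mJ2 ρ U1 U3 κ p
        = (1 / U1 p) * (U2 p * mJ1 ρ U2 U3 κ p
            + pd3 (Bern γ ρ U1 U2 U3 S) p
            - (Bern γ ρ U1 U2 U3 S p - (U1 p ^ 2 + U2 p ^ 2 + U3 p ^ 2) / 2)
                / (γ * S p) * pd3 S p
            - κ p * ρ p * (U1 p ^ 2 + U2 p ^ 2 + U3 p ^ 2) * pd3 κ p)) ∧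
      (mJ3 ρ U1 U2 κ p
        = (1 / U1 p) * (U3 p * mJ1 ρ U2 U3 κ p
            - (1 / p.1) * pd2 (Bern γ ρ U1 U2 U3 S) p
            + (Bern γ ρ U1 U2 U3 S p - (U1 p ^ 2 + U2 p ^ 2 + U3 p ^ 2) / 2)
                / (γ * S p) * ((1 / p.1) * pd2 S p)
            + κ p * ρ p * (U1 p ^ 2 + U2 p ^ 2 + U3 p ^ 2)
                * ((1 / p.1) * pd2 κ p))) ∧
      -- (iii) the deformation-curl system: the scalar deformation equation …
      (((γ - 1) * (Bern γ ρ U1 U2 U3 S p - (U1 p ^ 2 + U2 p ^ 2 + U3 p ^ 2) / 2)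
          - U1 p ^ 2) * pd1 U1 p
        + ((γ - 1) * (Bern γ ρ U1 U2 U3 S p - (U1 p ^ 2 + U2 p ^ 2 + U3 p ^ 2) / 2)
          - U2 p ^ 2) * ((1 / p.1) * pd2 U2 p)
        + ((γ - 1) * (Bern γ ρ U1 U2 U3 S p - (U1 p ^ 2 + U2 p ^ 2 + U3 p ^ 2) / 2)
          - U3 p ^ 2) * pd3 U3 p
        + (γ - 1) * (Bern γ ρ U1 U2 U3 S p - (U1 p ^ 2 + U2 p ^ 2 + U3 p ^ 2) / 2)
            * U1 p / p.1
        = U1 p * (U2 p * pd1 U2 p + U3 p * pd1 U3 p)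
          + U2 p * (U1 p * ((1 / p.1) * pd2 U1 p) + U3 p * ((1 / p.1) * pd2 U3 p))
          + U3 p * (U1 p * pd3 U1 p + U2 p * pd3 U2 p)) ∧
      -- … together with the equations expressing that curl((1-κ²ρ)u) has
      -- cylindrical components (J₁, J₂, J₃)
      ((1 / p.1) * pd2 (fun q => (1 - κ q ^ 2 * ρ q) * U3 q) p
          - pd3 (fun q => (1 - κ q ^ 2 * ρ q) * U2 q) p = mJ1 ρ U2 U3 κ p) ∧
      (pd3 (fun q => (1 - κ q ^ 2 * ρ q) * U1 q) p
          - pd1 (fun q => (1 - κ q ^ 2 * ρ q) * U3 q) p = mJ2 ρ U1 U3 κ p) ∧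
      (pd1 (fun q => (1 - κ q ^ 2 * ρ q) * U2 q) p
          + (1 - κ p ^ 2 * ρ p) * U2 p / p.1
          - (1 / p.1) * pd2 (fun q => (1 - κ q ^ 2 * ρ q) * U1 q) p
          = mJ3 ρ U1 U2 κ p)) := by
  obtain ⟨hcρ, hcU1, hcU2, hcU3, hcS, hcκ⟩ := hreg
  have hOpen : IsOpen (Cyl r1 r2 θ0) := isOpen_Ioo.prod (isOpen_Ioo.prod isOpen_Ioo)
  have key : ∀ p ∈ Cyl r1 r2 θ0, (CylMHD γ ρ U1 U2 U3 S κ p ↔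
      ((ρ p = ((γ - 1) / (γ * S p)) ^ (1 / (γ - 1))
          * (Bern γ ρ U1 U2 U3 S p - (U1 p ^ 2 + U2 p ^ 2 + U3 p ^ 2) / 2)
              ^ (1 / (γ - 1))) ∧
      (pd1 (Bern γ ρ U1 U2 U3 S) p
          + U2 p / (p.1 * U1 p) * pd2 (Bern γ ρ U1 U2 U3 S) p
          + U3 p / U1 p * pd3 (Bern γ ρ U1 U2 U3 S) p = 0) ∧
      (pd1 S p + U2 p / (p.1 * U1 p) * pd2 S p + U3 p / U1 p * pd3 S p = 0) ∧
      (pd1 κ p + U2 p / (p.1 * U1 p) * pd2 κ p + U3 p / U1 p * pd3 κ p = 0) ∧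
      (mJ2 ρ U1 U3 κ p
        = (1 / U1 p) * (U2 p * mJ1 ρ U2 U3 κ p
            + pd3 (Bern γ ρ U1 U2 U3 S) p
            - (Bern γ ρ U1 U2 U3 S p - (U1 p ^ 2 + U2 p ^ 2 + U3 p ^ 2) / 2)
                / (γ * S p) * pd3 S p
            - κ p * ρ p * (U1 p ^ 2 + U2 p ^ 2 + U3 p ^ 2) * pd3 κ p)) ∧
      (mJ3 ρ U1 U2 κ p
        = (1 / U1 p) * (U3 p * mJ1 ρ U2 U3 κ p
            - (1 / p.1) * pd2 (Bern γ ρ U1 U2 U3 S) p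
            + (Bern γ ρ U1 U2 U3 S p - (U1 p ^ 2 + U2 p ^ 2 + U3 p ^ 2) / 2)
                / (γ * S p) * ((1 / p.1) * pd2 S p)
            + κ p * ρ p * (U1 p ^ 2 + U2 p ^ 2 + U3 p ^ 2)
                * ((1 / p.1) * pd2 κ p))) ∧
      (((γ - 1) * (Bern γ ρ U1 U2 U3 S p - (U1 p ^ 2 + U2 p ^ 2 + U3 p ^ 2) / 2)
          - U1 p ^ 2) * pd1 U1 p
        + ((γ - 1) * (Bern γ ρ U1 U2 U3 S p - (U1 p ^ 2 + U2 p ^ 2 + U3 p ^ 2) / 2)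
          - U2 p ^ 2) * ((1 / p.1) * pd2 U2 p)
        + ((γ - 1) * (Bern γ ρ U1 U2 U3 S p - (U1 p ^ 2 + U2 p ^ 2 + U3 p ^ 2) / 2)
          - U3 p ^ 2) * pd3 U3 p
        + (γ - 1) * (Bern γ ρ U1 U2 U3 S p - (U1 p ^ 2 + U2 p ^ 2 + U3 p ^ 2) / 2)
            * U1 p / p.1
        = U1 p * (U2 p * pd1 U2 p + U3 p * pd1 U3 p)
          + U2 p * (U1 p * ((1 / p.1) * pd2 U1 p) + U3 p * ((1 / p.1) * pd2 U3 p))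
          + U3 p * (U1 p * pd3 U1 p + U2 p * pd3 U2 p)) ∧
      ((1 / p.1) * pd2 (fun q => (1 - κ q ^ 2 * ρ q) * U3 q) p
          - pd3 (fun q => (1 - κ q ^ 2 * ρ q) * U2 q) p = mJ1 ρ U2 U3 κ p) ∧
      (pd3 (fun q => (1 - κ q ^ 2 * ρ q) * U1 q) p
          - pd1 (fun q => (1 - κ q ^ 2 * ρ q) * U3 q) p = mJ2 ρ U1 U3 κ p) ∧
      (pd1 (fun q => (1 - κ q ^ 2 * ρ q) * U2 q) p
          + (1 - κ p ^ 2 * ρ p) * U2 p / p.1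
          - (1 / p.1) * pd2 (fun q => (1 - κ q ^ 2 * ρ q) * U1 q) p
          = mJ3 ρ U1 U2 κ p))) := by
    rintro ⟨x, y, z⟩ hp
    have hx : 0 < x := lt_trans hr1 hp.1.1
    have hx0 : x ≠ 0 := ne_of_gt hx
    have haP : 0 < ρ (x, y, z) := hρ _ hp
    have huP : 0 < U1 (x, y, z) := hU1 _ hp
    have hsP : 0 < S (x, y, z) := hS _ hp
    have ha0 : ρ (x, y, z) ≠ 0 := ne_of_gt haP
    have hu0 : U1 (x, y, z) ≠ 0 := ne_of_gt huP
    have hs0 : S (x, y, z) ≠ 0 := ne_of_gt hsP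
    have heP : 0 < ρ (x, y, z) ^ (γ - 1) := Real.rpow_pos_of_pos haP _
    have he0 : ρ (x, y, z) ^ (γ - 1) ≠ 0 := ne_of_gt heP
    have hγ1 : γ - 1 ≠ 0 := ne_of_gt (by linarith)
    have hγ0 : γ ≠ 0 := ne_of_gt (by linarith)
    have hγ1P : (0:ℝ) < γ - 1 := by linarith
    have hmem : Cyl r1 r2 θ0 ∈ nhds ((x, y, z) : R3) := hOpen.mem_nhds hp
    have hdρ : DifferentiableAt ℝ ρ (x, y, z) :=
      (hcρ.differentiableOn two_ne_zero).differentiableAt hmem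
    have hdU1 : DifferentiableAt ℝ U1 (x, y, z) :=
      (hcU1.differentiableOn two_ne_zero).differentiableAt hmem
    have hdU2 : DifferentiableAt ℝ U2 (x, y, z) :=
      (hcU2.differentiableOn two_ne_zero).differentiableAt hmem
    have hdU3 : DifferentiableAt ℝ U3 (x, y, z) :=
      (hcU3.differentiableOn two_ne_zero).differentiableAt hmem
    have hdS : DifferentiableAt ℝ S (x, y, z) :=
      (hcS.differentiableOn two_ne_zero).differentiableAt hmem
    have hdκ : DifferentiableAt ℝ κ (x, y, z) :=
      (hcκ.differentiableOn two_ne_zero).differentiableAt hmem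
    have mk1 : ∀ {f : R3 → ℝ}, DifferentiableAt ℝ f (x, y, z) →
        HasDerivAt (fun t => f (t, y, z)) (pd1 f (x, y, z)) x := by
      intro f hf
      have h : DifferentiableAt ℝ (fun t : ℝ => f (t, y, z)) x :=
        hf.comp x (DifferentiableAt.prodMk differentiableAt_id (differentiableAt_const _))
      exact h.hasDerivAt
    have mk2 : ∀ {f : R3 → ℝ}, DifferentiableAt ℝ f (x, y, z) →
        HasDerivAt (fun t => f (x, t, z)) (pd2 f (x, y, z)) y := by
      intro f hf
      have h : DifferentiableAt ℝ (fun t : ℝ => f (x, t, z)) y :=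
        hf.comp y (DifferentiableAt.prodMk (differentiableAt_const _)
          (DifferentiableAt.prodMk differentiableAt_id (differentiableAt_const _)))
      exact h.hasDerivAt
    have mk3 : ∀ {f : R3 → ℝ}, DifferentiableAt ℝ f (x, y, z) →
        HasDerivAt (fun t => f (x, y, t)) (pd3 f (x, y, z)) z := by
      intro f hf
      have h : DifferentiableAt ℝ (fun t : ℝ => f (x, y, t)) z :=
        hf.comp z (DifferentiableAt.prodMk (differentiableAt_const _)
          (DifferentiableAt.prodMk (differentiableAt_const _) differentiableAt_id))
      exact h.hasDerivAt
    have Ha1 := mk1 hdρ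
    have Ha2 := mk2 hdρ
    have Ha3 := mk3 hdρ
    have Hu1 := mk1 hdU1
    have Hu2 := mk2 hdU1
    have Hu3 := mk3 hdU1
    have Hv1 := mk1 hdU2
    have Hv2 := mk2 hdU2
    have Hv3 := mk3 hdU2
    have Hw1 := mk1 hdU3
    have Hw2 := mk2 hdU3
    have Hw3 := mk3 hdU3
    have Hs1 := mk1 hdS
    have Hs2 := mk2 hdS
    have Hs3 := mk3 hdS
    have Hk1 := mk1 hdκ
    have Hk2 := mk2 hdκ
    have Hk3 := mk3 hdκ
    have hγa : ρ (x, y, z) ^ γ = ρ (x, y, z) * ρ (x, y, z) ^ (γ - 1) := by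
      nth_rewrite 1 [show γ = (γ - 1) + 1 by ring]
      rw [Real.rpow_add_one ha0]
      ring
    have hg2 : ρ (x, y, z) ^ (γ - 1 - 1) = ρ (x, y, z) ^ (γ - 1) / ρ (x, y, z) := by
      rw [show γ - 1 - 1 = (γ - 1) + (-1) by ring, Real.rpow_add haP, Real.rpow_neg_one]
      ring
    have cA1 : pd1 (fun q => ρ q * U1 q) (x, y, z)
        = pd1 ρ (x, y, z) * U1 (x, y, z) + ρ (x, y, z) * pd1 U1 (x, y, z) := (Ha1.mul Hu1).deriv
    have cA2 : pd2 (fun q => ρ q * U2 q) (x, y, z)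
        = pd2 ρ (x, y, z) * U2 (x, y, z) + ρ (x, y, z) * pd2 U2 (x, y, z) := (Ha2.mul Hv2).deriv
    have cA3 : pd3 (fun q => ρ q * U3 q) (x, y, z)
        = pd3 ρ (x, y, z) * U3 (x, y, z) + ρ (x, y, z) * pd3 U3 (x, y, z) := (Ha3.mul Hw3).deriv
    have cP1 : pd1 (fun q => S q * ρ q ^ γ) (x, y, z)
        = pd1 S (x, y, z) * (ρ (x, y, z) * ρ (x, y, z) ^ (γ - 1))
          + S (x, y, z) * (pd1 ρ (x, y, z) * γ * ρ (x, y, z) ^ (γ - 1)) :=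
      (Hs1.mul (Ha1.rpow_const (p := γ) (Or.inl ha0))).deriv.trans (by rw [hγa])
    have cP2 : pd2 (fun q => S q * ρ q ^ γ) (x, y, z)
        = pd2 S (x, y, z) * (ρ (x, y, z) * ρ (x, y, z) ^ (γ - 1))
          + S (x, y, z) * (pd2 ρ (x, y, z) * γ * ρ (x, y, z) ^ (γ - 1)) :=
      (Hs2.mul (Ha2.rpow_const (p := γ) (Or.inl ha0))).deriv.trans (by rw [hγa])
    have cP3 : pd3 (fun q => S q * ρ q ^ γ) (x, y, z)
        = pd3 S (x, y, z) * (ρ (x, y, z) * ρ (x, y, z) ^ (γ - 1))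
          + S (x, y, z) * (pd3 ρ (x, y, z) * γ * ρ (x, y, z) ^ (γ - 1)) :=
      (Hs3.mul (Ha3.rpow_const (p := γ) (Or.inl ha0))).deriv.trans (by rw [hγa])
    have cK12 : pd1 (fun q => κ q * ρ q * U2 q) (x, y, z)
        = (pd1 κ (x, y, z) * ρ (x, y, z) + κ (x, y, z) * pd1 ρ (x, y, z)) * U2 (x, y, z)
          + κ (x, y, z) * ρ (x, y, z) * pd1 U2 (x, y, z) := ((Hk1.mul Ha1).mul Hv1).deriv
    have cK13 : pd1 (fun q => κ q * ρ q * U3 q) (x, y, z)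
        = (pd1 κ (x, y, z) * ρ (x, y, z) + κ (x, y, z) * pd1 ρ (x, y, z)) * U3 (x, y, z)
          + κ (x, y, z) * ρ (x, y, z) * pd1 U3 (x, y, z) := ((Hk1.mul Ha1).mul Hw1).deriv
    have cK21 : pd2 (fun q => κ q * ρ q * U1 q) (x, y, z)
        = (pd2 κ (x, y, z) * ρ (x, y, z) + κ (x, y, z) * pd2 ρ (x, y, z)) * U1 (x, y, z)
          + κ (x, y, z) * ρ (x, y, z) * pd2 U1 (x, y, z) := ((Hk2.mul Ha2).mul Hu2).deriv
    have cK23 : pd2 (fun q => κ q * ρ q * U3 q) (x, y, z)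
        = (pd2 κ (x, y, z) * ρ (x, y, z) + κ (x, y, z) * pd2 ρ (x, y, z)) * U3 (x, y, z)
          + κ (x, y, z) * ρ (x, y, z) * pd2 U3 (x, y, z) := ((Hk2.mul Ha2).mul Hw2).deriv
    have cK31 : pd3 (fun q => κ q * ρ q * U1 q) (x, y, z)
        = (pd3 κ (x, y, z) * ρ (x, y, z) + κ (x, y, z) * pd3 ρ (x, y, z)) * U1 (x, y, z)
          + κ (x, y, z) * ρ (x, y, z) * pd3 U1 (x, y, z) := ((Hk3.mul Ha3).mul Hu3).deriv
    have cK32 : pd3 (fun q => κ q * ρ q * U2 q) (x, y, z)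
        = (pd3 κ (x, y, z) * ρ (x, y, z) + κ (x, y, z) * pd3 ρ (x, y, z)) * U2 (x, y, z)
          + κ (x, y, z) * ρ (x, y, z) * pd3 U2 (x, y, z) := ((Hk3.mul Ha3).mul Hv3).deriv
    have cM12 : pd1 (fun q => (1 - κ q ^ 2 * ρ q) * U2 q) (x, y, z)
        = (-(2 * κ (x, y, z) * pd1 κ (x, y, z) * ρ (x, y, z)) - κ (x, y, z) ^ 2 * pd1 ρ (x, y, z)) * U2 (x, y, z)
          + (1 - κ (x, y, z) ^ 2 * ρ (x, y, z)) * pd1 U2 (x, y, z) :=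
      ((((hasDerivAt_const x (1:ℝ)).sub ((Hk1.pow 2).mul Ha1)).mul Hv1).deriv).trans
        (by simp only [Pi.sub_apply, Pi.mul_apply, Pi.pow_apply]; push_cast; ring)
    have cM13 : pd1 (fun q => (1 - κ q ^ 2 * ρ q) * U3 q) (x, y, z)
        = (-(2 * κ (x, y, z) * pd1 κ (x, y, z) * ρ (x, y, z)) - κ (x, y, z) ^ 2 * pd1 ρ (x, y, z)) * U3 (x, y, z)
          + (1 - κ (x, y, z) ^ 2 * ρ (x, y, z)) * pd1 U3 (x, y, z) :=
      ((((hasDerivAt_const x (1:ℝ)).sub ((Hk1.pow 2).mul Ha1)).mul Hw1).deriv).trans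
        (by simp only [Pi.sub_apply, Pi.mul_apply, Pi.pow_apply]; push_cast; ring)
    have cM21 : pd2 (fun q => (1 - κ q ^ 2 * ρ q) * U1 q) (x, y, z)
        = (-(2 * κ (x, y, z) * pd2 κ (x, y, z) * ρ (x, y, z)) - κ (x, y, z) ^ 2 * pd2 ρ (x, y, z)) * U1 (x, y, z)
          + (1 - κ (x, y, z) ^ 2 * ρ (x, y, z)) * pd2 U1 (x, y, z) :=
      ((((hasDerivAt_const y (1:ℝ)).sub ((Hk2.pow 2).mul Ha2)).mul Hu2).deriv).trans
        (by simp only [Pi.sub_apply, Pi.mul_apply, Pi.pow_apply]; push_cast; ring)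
    have cM23 : pd2 (fun q => (1 - κ q ^ 2 * ρ q) * U3 q) (x, y, z)
        = (-(2 * κ (x, y, z) * pd2 κ (x, y, z) * ρ (x, y, z)) - κ (x, y, z) ^ 2 * pd2 ρ (x, y, z)) * U3 (x, y, z)
          + (1 - κ (x, y, z) ^ 2 * ρ (x, y, z)) * pd2 U3 (x, y, z) :=
      ((((hasDerivAt_const y (1:ℝ)).sub ((Hk2.pow 2).mul Ha2)).mul Hw2).deriv).trans
        (by simp only [Pi.sub_apply, Pi.mul_apply, Pi.pow_apply]; push_cast; ring)
    have cM31 : pd3 (fun q => (1 - κ q ^ 2 * ρ q) * U1 q) (x, y, z)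
        = (-(2 * κ (x, y, z) * pd3 κ (x, y, z) * ρ (x, y, z)) - κ (x, y, z) ^ 2 * pd3 ρ (x, y, z)) * U1 (x, y, z)
          + (1 - κ (x, y, z) ^ 2 * ρ (x, y, z)) * pd3 U1 (x, y, z) :=
      ((((hasDerivAt_const z (1:ℝ)).sub ((Hk3.pow 2).mul Ha3)).mul Hu3).deriv).trans
        (by simp only [Pi.sub_apply, Pi.mul_apply, Pi.pow_apply]; push_cast; ring)
    have cM32 : pd3 (fun q => (1 - κ q ^ 2 * ρ q) * U2 q) (x, y, z)
        = (-(2 * κ (x, y, z) * pd3 κ (x, y, z) * ρ (x, y, z)) - κ (x, y, z) ^ 2 * pd3 ρ (x, y, z)) * U2 (x, y, z)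
          + (1 - κ (x, y, z) ^ 2 * ρ (x, y, z)) * pd3 U2 (x, y, z) :=
      ((((hasDerivAt_const z (1:ℝ)).sub ((Hk3.pow 2).mul Ha3)).mul Hv3).deriv).trans
        (by simp only [Pi.sub_apply, Pi.mul_apply, Pi.pow_apply]; push_cast; ring)
    have cB1 : pd1 (Bern γ ρ U1 U2 U3 S) (x, y, z)
        = U1 (x, y, z) * pd1 U1 (x, y, z) + U2 (x, y, z) * pd1 U2 (x, y, z) + U3 (x, y, z) * pd1 U3 (x, y, z)
          + (γ * (pd1 S (x, y, z) * ρ (x, y, z) ^ (γ - 1))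
             + γ * S (x, y, z) * ((γ - 1) * (ρ (x, y, z) ^ (γ - 1) / ρ (x, y, z)) * pd1 ρ (x, y, z))) / (γ - 1) := by
      have h := (((((Hu1.pow 2).add (Hv1.pow 2)).add (Hw1.pow 2)).div_const 2).add
        (((Hs1.const_mul γ).mul (Ha1.rpow_const (p := γ - 1) (Or.inl ha0))).div_const (γ - 1))).deriv
      refine h.trans ?_
      rw [hg2]
      push_cast
      ring
    have cB2 : pd2 (Bern γ ρ U1 U2 U3 S) (x, y, z)
        = U1 (x, y, z) * pd2 U1 (x, y, z) + U2 (x, y, z) * pd2 U2 (x, y, z) + U3 (x, y, z) * pd2 U3 (x, y, z)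
          + (γ * (pd2 S (x, y, z) * ρ (x, y, z) ^ (γ - 1))
             + γ * S (x, y, z) * ((γ - 1) * (ρ (x, y, z) ^ (γ - 1) / ρ (x, y, z)) * pd2 ρ (x, y, z))) / (γ - 1) := by
      have h := (((((Hu2.pow 2).add (Hv2.pow 2)).add (Hw2.pow 2)).div_const 2).add
        (((Hs2.const_mul γ).mul (Ha2.rpow_const (p := γ - 1) (Or.inl ha0))).div_const (γ - 1))).deriv
      refine h.trans ?_
      rw [hg2]
      push_cast
      ring
    have cB3 : pd3 (Bern γ ρ U1 U2 U3 S) (x, y, z)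
        = U1 (x, y, z) * pd3 U1 (x, y, z) + U2 (x, y, z) * pd3 U2 (x, y, z) + U3 (x, y, z) * pd3 U3 (x, y, z)
          + (γ * (pd3 S (x, y, z) * ρ (x, y, z) ^ (γ - 1))
             + γ * S (x, y, z) * ((γ - 1) * (ρ (x, y, z) ^ (γ - 1) / ρ (x, y, z)) * pd3 ρ (x, y, z))) / (γ - 1) := by
      have h := (((((Hu3.pow 2).add (Hv3.pow 2)).add (Hw3.pow 2)).div_const 2).add
        (((Hs3.const_mul γ).mul (Ha3.rpow_const (p := γ - 1) (Or.inl ha0))).div_const (γ - 1))).deriv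
      refine h.trans ?_
      rw [hg2]
      push_cast
      ring
    have cBv : Bern γ ρ U1 U2 U3 S (x, y, z)
        = (U1 (x, y, z) ^ 2 + U2 (x, y, z) ^ 2 + U3 (x, y, z) ^ 2) / 2
          + γ * S (x, y, z) * ρ (x, y, z) ^ (γ - 1) / (γ - 1) := rfl
    simp only [CylMHD, convD, mJ1, mJ2, mJ3]
    try dsimp only
    rw [cA1, cA2, cA3, cP1, cP2, cP3, cK12, cK13, cK21, cK23, cK31, cK32,
      cM12, cM13, cM21, cM23, cM31, cM32, cB1, cB2, cB3, cBv]
    set a := ρ (x, y, z) with h_set_a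
    set u := U1 (x, y, z) with h_set_u
    set v := U2 (x, y, z) with h_set_v
    set w := U3 (x, y, z) with h_set_w
    set s := S (x, y, z) with h_set_s
    set k := κ (x, y, z) with h_set_k
    set a1 := pd1 ρ (x, y, z) with h_set_a1
    set a2 := pd2 ρ (x, y, z) with h_set_a2
    set a3 := pd3 ρ (x, y, z) with h_set_a3
    set u1 := pd1 U1 (x, y, z) with h_set_u1
    set u2 := pd2 U1 (x, y, z) with h_set_u2
    set u3 := pd3 U1 (x, y, z) with h_set_u3
    set v1 := pd1 U2 (x, y, z) with h_set_v1
    set v2 := pd2 U2 (x, y, z) with h_set_v2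
    set v3 := pd3 U2 (x, y, z) with h_set_v3
    set w1 := pd1 U3 (x, y, z) with h_set_w1
    set w2 := pd2 U3 (x, y, z) with h_set_w2
    set w3 := pd3 U3 (x, y, z) with h_set_w3
    set s1 := pd1 S (x, y, z) with h_set_s1
    set s2 := pd2 S (x, y, z) with h_set_s2
    set s3 := pd3 S (x, y, z) with h_set_s3
    set k1 := pd1 κ (x, y, z) with h_set_k1
    set k2 := pd2 κ (x, y, z) with h_set_k2
    set k3 := pd3 κ (x, y, z) with h_set_k3
    set e := a ^ (γ - 1) with he_eq
    clear_value a u v w s k a1 a2 a3 u1 u2 u3 v1 v2 v3 w1 w2 w3 s1 s2 s3 k1 k2 k3 e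
    have hD0 : a = ((γ - 1) / (γ * s)) ^ (1 / (γ - 1))
        * ((u ^ 2 + v ^ 2 + w ^ 2) / 2 + γ * s * e / (γ - 1)
            - (u ^ 2 + v ^ 2 + w ^ 2) / 2) ^ (1 / (γ - 1)) := by
      rw [show (u ^ 2 + v ^ 2 + w ^ 2) / 2 + γ * s * e / (γ - 1)
            - (u ^ 2 + v ^ 2 + w ^ 2) / 2 = (γ * s / (γ - 1)) * e by ring]
      rw [he_eq]
      rw [← Real.mul_rpow (by positivity) (by positivity)]
      rw [show (γ - 1) / (γ * s) * (γ * s / (γ - 1) * a ^ (γ - 1)) = a ^ (γ - 1) by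
        field_simp]
      rw [← Real.rpow_mul (le_of_lt haP), mul_one_div_cancel hγ1, Real.rpow_one]
    constructor
    · rintro ⟨h0, h1, h2, h3, h4, h5⟩
      have hQ0 : (x*(a1*u + a*u1) + a*u + (a2*v + a*v2) + x*(a3*w + a*w3)) = 0 := clear_mp (D := x) (by field_simp [hx0, hu0, ha0, hs0, hγ0, hγ1]; ring) h0
      have hQ1E : (x*a*(u*u1) + a*v*u2 + x*a*w*u3 + x*(s1*(a*e) + s*(γ*e*a1)) - a*v^2 + k*v*a*(x*((k1*a + k*a1)*v + k*a*v1) + k*a*v - ((k2*a + k*a2)*u + k*a*u2)) - x*a*k*w*(((k3*a + k*a3)*u + k*a*u3) - ((k1*a + k*a1)*w + k*a*w1))) = 0 := clear_mp (D := x * a) (by field_simp [hx0, hu0, ha0, hs0, hγ0, hγ1]; ring) h1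
      have hQ2E : (x*a*u*v1 + a*v*v2 + x*a*w*v3 + (s2*(a*e) + s*(γ*e*a2)) + a*u*v - k*u*a*(x*((k1*a + k*a1)*v + k*a*v1) + k*a*v - ((k2*a + k*a2)*u + k*a*u2)) + k*w*a*(((k2*a + k*a2)*w + k*a*w2) - x*((k3*a + k*a3)*v + k*a*v3))) = 0 := clear_mp (D := x * a) (by field_simp [hx0, hu0, ha0, hs0, hγ0, hγ1]; ring) h2
      have hQ3E : (x*a*u*w1 + a*v*w2 + x*a*w*w3 + x*(s3*(a*e) + s*(γ*e*a3)) - k*v*a*(((k2*a + k*a2)*w + k*a*w2) - x*((k3*a + k*a3)*v + k*a*v3)) + x*a*k*u*(((k3*a + k*a3)*u + k*a*u3) - ((k1*a + k*a1)*w + k*a*w1))) = 0 := clear_mp (D := x * a) (by field_simp [hx0, hu0, ha0, hs0, hγ0, hγ1]; ring) h3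
      have hQ4E : (x*u*((γ-1)*a*(u*u1 + v*v1 + w*w1) + γ*a*e*s1 + γ*(γ-1)*s*e*a1) + v*((γ-1)*a*(u*u2 + v*v2 + w*w2) + γ*a*e*s2 + γ*(γ-1)*s*e*a2) + x*w*((γ-1)*a*(u*u3 + v*v3 + w*w3) + γ*a*e*s3 + γ*(γ-1)*s*e*a3)) = 0 := clear_mp (D := x * ((γ - 1) * a)) (by field_simp [hx0, hu0, ha0, hs0, hγ0, hγ1]; ring) h4
      have hQ5E : (x*u*k1 + v*k2 + x*w*k3) = 0 := clear_mp (D := x) (by field_simp [hx0, hu0, ha0, hs0, hγ0, hγ1]; ring) h5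
      have hP2 : (x*u*s1 + v*s2 + x*w*s3) = 0 := by
        refine cancel_factor (c := a * e) (mul_ne_zero ha0 he0) ?_
        linear_combination hQ4E - (γ - 1) * u * hQ1E - (γ - 1) * v * hQ2E - (γ - 1) * w * hQ3E
      have hP4 : ((γ-1)*a*x*u*(((-(2*k*k3*a) - k^2*a3)*u + (1 - k^2*a)*u3) - ((-(2*k*k1*a) - k^2*a1)*w + (1 - k^2*a)*w1)) - (γ-1)*a*v*(((-(2*k*k2*a) - k^2*a2)*w + (1 - k^2*a)*w2) - x*((-(2*k*k3*a) - k^2*a3)*v + (1 - k^2*a)*v3)) - x*((γ-1)*a*(u*u3 + v*v3 + w*w3) + γ*a*e*s3 + γ*(γ-1)*s*e*a3) + x*a*e*s3 + x*(γ-1)*a^2*k*(u^2+v^2+w^2)*k3) = 0 := by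
        linear_combination (γ - 1) * a ^ 2 * k * w * hQ5E - (γ - 1) * hQ3E
      have hP5 : ((γ-1)*a*u*(x*((-(2*k*k1*a) - k^2*a1)*v + (1 - k^2*a)*v1) + (1 - k^2*a)*v - ((-(2*k*k2*a) - k^2*a2)*u + (1 - k^2*a)*u2)) - (γ-1)*a*w*(((-(2*k*k2*a) - k^2*a2)*w + (1 - k^2*a)*w2) - x*((-(2*k*k3*a) - k^2*a3)*v + (1 - k^2*a)*v3)) + ((γ-1)*a*(u*u2 + v*v2 + w*w2) + γ*a*e*s2 + γ*(γ-1)*s*e*a2) - a*e*s2 - (γ-1)*a^2*k*(u^2+v^2+w^2)*k2) = 0 := by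
        linear_combination (γ - 1) * hQ2E - (γ - 1) * a ^ 2 * k * v * hQ5E
      have hP6 : (x*(γ*s*e - u^2)*u1 + (γ*s*e - v^2)*v2 + x*(γ*s*e - w^2)*w3 + γ*s*e*u - (x*u*(v*v1 + w*w1) + v*(u*u2 + w*w2) + x*w*(u*u3 + v*v3))) = 0 := by
        refine cancel_factor (c := a) ha0 ?_
        linear_combination γ * s * e * hQ0 + a * e * hP2 - u * hQ1E - v * hQ2E - w * hQ3E
      refine ⟨hD0, ?_, ?_, ?_, ?_, ?_, ?_, True.intro, True.intro, True.intro⟩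
      · exact clear_mpr (D := x * u * ((γ - 1) * a))
          (mul_ne_zero (mul_ne_zero hx0 hu0) (mul_ne_zero hγ1 ha0)) (by field_simp [hx0, hu0, ha0, hs0, hγ0, hγ1]; ring) hQ4E
      · exact clear_mpr (D := x * u) (mul_ne_zero hx0 hu0) (by field_simp [hx0, hu0, ha0, hs0, hγ0, hγ1]; ring) hP2
      · exact clear_mpr (D := x * u) (mul_ne_zero hx0 hu0) (by field_simp [hx0, hu0, ha0, hs0, hγ0, hγ1]; ring) hQ5E
      · exact clear_mpr (D := x * u * ((γ - 1) * a))
          (mul_ne_zero (mul_ne_zero hx0 hu0) (mul_ne_zero hγ1 ha0)) (by field_simp [hx0, hu0, ha0, hs0, hγ0, hγ1]; ring) hP4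
      · exact clear_mpr (D := x * u * ((γ - 1) * a))
          (mul_ne_zero (mul_ne_zero hx0 hu0) (mul_ne_zero hγ1 ha0)) (by field_simp [hx0, hu0, ha0, hs0, hγ0, hγ1]; ring) hP5
      · exact clear_mpr (D := x) hx0 (by field_simp [hx0, hu0, ha0, hs0, hγ0, hγ1]; ring) hP6
    · rintro ⟨-, hb1, hb2, hb3, hb4, hb5, hb6, -, -, -⟩
      have hQ4E : (x*u*((γ-1)*a*(u*u1 + v*v1 + w*w1) + γ*a*e*s1 + γ*(γ-1)*s*e*a1) + v*((γ-1)*a*(u*u2 + v*v2 + w*w2) + γ*a*e*s2 + γ*(γ-1)*s*e*a2) + x*w*((γ-1)*a*(u*u3 + v*v3 + w*w3) + γ*a*e*s3 + γ*(γ-1)*s*e*a3)) = 0 := clear_mp (D := x * u * ((γ - 1) * a)) (by field_simp [hx0, hu0, ha0, hs0, hγ0, hγ1]; ring) hb1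
      have hP2 : (x*u*s1 + v*s2 + x*w*s3) = 0 := clear_mp (D := x * u) (by field_simp [hx0, hu0, ha0, hs0, hγ0, hγ1]; ring) hb2
      have hQ5E : (x*u*k1 + v*k2 + x*w*k3) = 0 := clear_mp (D := x * u) (by field_simp [hx0, hu0, ha0, hs0, hγ0, hγ1]; ring) hb3
      have hP4 : ((γ-1)*a*x*u*(((-(2*k*k3*a) - k^2*a3)*u + (1 - k^2*a)*u3) - ((-(2*k*k1*a) - k^2*a1)*w + (1 - k^2*a)*w1)) - (γ-1)*a*v*(((-(2*k*k2*a) - k^2*a2)*w + (1 - k^2*a)*w2) - x*((-(2*k*k3*a) - k^2*a3)*v + (1 - k^2*a)*v3)) - x*((γ-1)*a*(u*u3 + v*v3 + w*w3) + γ*a*e*s3 + γ*(γ-1)*s*e*a3) + x*a*e*s3 + x*(γ-1)*a^2*k*(u^2+v^2+w^2)*k3) = 0 := clear_mp (D := x * u * ((γ - 1) * a)) (by field_simp [hx0, hu0, ha0, hs0, hγ0, hγ1]; ring) hb4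
      have hP5 : ((γ-1)*a*u*(x*((-(2*k*k1*a) - k^2*a1)*v + (1 - k^2*a)*v1) + (1 - k^2*a)*v - ((-(2*k*k2*a) - k^2*a2)*u + (1 - k^2*a)*u2)) - (γ-1)*a*w*(((-(2*k*k2*a) - k^2*a2)*w + (1 - k^2*a)*w2) - x*((-(2*k*k3*a) - k^2*a3)*v + (1 - k^2*a)*v3)) + ((γ-1)*a*(u*u2 + v*v2 + w*w2) + γ*a*e*s2 + γ*(γ-1)*s*e*a2) - a*e*s2 - (γ-1)*a^2*k*(u^2+v^2+w^2)*k2) = 0 := clear_mp (D := x * u * ((γ - 1) * a)) (by field_simp [hx0, hu0, ha0, hs0, hγ0, hγ1]; ring) hb5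
      have hP6 : (x*(γ*s*e - u^2)*u1 + (γ*s*e - v^2)*v2 + x*(γ*s*e - w^2)*w3 + γ*s*e*u - (x*u*(v*v1 + w*w1) + v*(u*u2 + w*w2) + x*w*(u*u3 + v*v3))) = 0 := clear_mp (D := x) (by field_simp [hx0, hu0, ha0, hs0, hγ0, hγ1]; ring) hb6
      have hQ0 : (x*(a1*u + a*u1) + a*u + (a2*v + a*v2) + x*(a3*w + a*w3)) = 0 := by
        refine cancel_factor (c := (γ - 1) * (γ * (s * e)))
          (mul_ne_zero hγ1 (mul_ne_zero hγ0 (mul_ne_zero hs0 he0))) ?_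
        linear_combination (γ - 1) * a * hP6 + hQ4E - γ * a * e * hP2
      have hQ1E : (x*a*(u*u1) + a*v*u2 + x*a*w*u3 + x*(s1*(a*e) + s*(γ*e*a1)) - a*v^2 + k*v*a*(x*((k1*a + k*a1)*v + k*a*v1) + k*a*v - ((k2*a + k*a2)*u + k*a*u2)) - x*a*k*w*(((k3*a + k*a3)*u + k*a*u3) - ((k1*a + k*a1)*w + k*a*w1))) = 0 := by
        refine cancel_factor (c := (γ - 1) * u) (mul_ne_zero hγ1 hu0) ?_
        linear_combination hQ4E - a * e * hP2 - (γ - 1) * a ^ 2 * k * (v ^ 2 + w ^ 2) * hQ5E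
          - v * hP5 + w * hP4
      have hQ2E : (x*a*u*v1 + a*v*v2 + x*a*w*v3 + (s2*(a*e) + s*(γ*e*a2)) + a*u*v - k*u*a*(x*((k1*a + k*a1)*v + k*a*v1) + k*a*v - ((k2*a + k*a2)*u + k*a*u2)) + k*w*a*(((k2*a + k*a2)*w + k*a*w2) - x*((k3*a + k*a3)*v + k*a*v3))) = 0 := by
        refine cancel_factor (c := γ - 1) hγ1 ?_
        linear_combination hP5 + (γ - 1) * a ^ 2 * k * v * hQ5E
      have hQ3E : (x*a*u*w1 + a*v*w2 + x*a*w*w3 + x*(s3*(a*e) + s*(γ*e*a3)) - k*v*a*(((k2*a + k*a2)*w + k*a*w2) - x*((k3*a + k*a3)*v + k*a*v3)) + x*a*k*u*(((k3*a + k*a3)*u + k*a*u3) - ((k1*a + k*a1)*w + k*a*w1))) = 0 := by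
        refine cancel_factor (c := γ - 1) hγ1 ?_
        linear_combination (γ - 1) * a ^ 2 * k * w * hQ5E - hP4
      refine ⟨?_, ?_, ?_, ?_, ?_, ?_⟩
      · exact clear_mpr (D := x) hx0 (by field_simp [hx0, hu0, ha0, hs0, hγ0, hγ1]; ring) hQ0
      · exact clear_mpr (D := x * a) (mul_ne_zero hx0 ha0) (by field_simp [hx0, hu0, ha0, hs0, hγ0, hγ1]; ring) hQ1E
      · exact clear_mpr (D := x * a) (mul_ne_zero hx0 ha0) (by field_simp [hx0, hu0, ha0, hs0, hγ0, hγ1]; ring) hQ2E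
      · exact clear_mpr (D := x * a) (mul_ne_zero hx0 ha0) (by field_simp [hx0, hu0, ha0, hs0, hγ0, hγ1]; ring) hQ3E
      · exact clear_mpr (D := x * ((γ - 1) * a)) (mul_ne_zero hx0 (mul_ne_zero hγ1 ha0))
          (by field_simp [hx0, hu0, ha0, hs0, hγ0, hγ1]; ring) hQ4E
      · exact clear_mpr (D := x) hx0 (by field_simp [hx0, hu0, ha0, hs0, hγ0, hγ1]; ring) hQ5E
  constructor
  · intro H p hp
    exact (key p hp).mp (H p hp)
  · intro H p hp
    exact (key p hp).mpr (H p hp)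
end
end

section
/- Let F₂, F₃ be two C¹ smooth functions defined on Ē, where E = (−θ₀,θ₀)×(−1,1) with coordinates (y₂,y₃), and let r_s > 0. Then the following two statements are equivalent: (1) F₂ ≡ 0 and F₃ ≡ 0 on Ē; (2) F₂ and F₃ solve the boundary value problem: (1/r_s)∂_{y₂}F₃ − ∂_{y₃}F₂ = 0 in E, (1/r_s)∂_{y₂}F₂ + ∂_{y₃}F₃ = 0 in E, F₂(±θ₀, y₃) = 0 for y₃ ∈ [−1,1], and F₃(y₂, ±1) = 0 for y₂ ∈ [−θ₀,θ₀]. -/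
noncomputable section

open Set Complex Filter Topology

lemma closure_crect {a : ℝ} (ha : 0 < a) :
    closure (Set.Ioo (-a) a ×ℂ Set.Ioo (-1 : ℝ) 1) = Set.Icc (-a) a ×ℂ Set.Icc (-1 : ℝ) 1 := by
  rw [Complex.closure_reProdIm, closure_Ioo (by linarith : (-a) ≠ a),
    closure_Ioo (by norm_num : (-1 : ℝ) ≠ 1)]

lemma convex_crect (a : ℝ) : Convex ℝ (Set.Ioo (-a) a ×ℂ Set.Ioo (-1 : ℝ) 1) :=
  ((convex_Ioo _ _).linear_preimage Complex.reLm).inter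
    ((convex_Ioo _ _).linear_preimage Complex.imLm)

lemma isBounded_crect (a : ℝ) : Bornology.IsBounded (Set.Ioo (-a) a ×ℂ Set.Ioo (-1 : ℝ) 1) :=
  (Metric.isBounded_Ioo _ _).reProdIm (Metric.isBounded_Ioo _ _)

/-- Key uniqueness lemma: a function holomorphic on the open rectangle, continuous up to the
boundary, whose square has vanishing imaginary part on the boundary, and which vanishes at the
corner `a + i`, vanishes identically. -/
lemma crect_key {a : ℝ} (ha : 0 < a) {f : ℂ → ℂ}
    (hd : DiffContOnCl ℂ f (Set.Ioo (-a) a ×ℂ Set.Ioo (-1 : ℝ) 1))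
    (hb : ∀ z ∈ frontier (Set.Ioo (-a) a ×ℂ Set.Ioo (-1 : ℝ) 1), (f z ^ 2).im = 0)
    (hcorner : f ⟨a, 1⟩ = 0) :
    ∀ z ∈ Set.Icc (-a) a ×ℂ Set.Icc (-1 : ℝ) 1, f z = 0 := by
  set R : Set ℂ := Set.Ioo (-a) a ×ℂ Set.Ioo (-1 : ℝ) 1 with hR
  have hRopen : IsOpen R := isOpen_Ioo.reProdIm isOpen_Ioo
  have hclos : closure R = Set.Icc (-a) a ×ℂ Set.Icc (-1 : ℝ) 1 := closure_crect ha
  set g : ℂ → ℂ := fun z => f z ^ 2 with hg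
  have hgd : DifferentiableOn ℂ g R := hd.differentiableOn.pow 2
  have hgc : ContinuousOn g (closure R) := hd.continuousOn.pow 2
  -- Step A: Im (f z ^ 2) = 0 on the closure, by the maximum modulus principle
  have himA : ∀ z ∈ closure R, (g z).im = 0 := by
    have key : ∀ c : ℂ, c.re = 0 → ∀ z ∈ closure R, ‖Complex.exp (c * g z)‖ ≤ 1 := by
      intro c hc z hz
      refine Complex.norm_le_of_forall_mem_frontier_norm_le (isBounded_crect a)
        ⟨((hgd.const_smul c).cexp :), ((hgc.const_smul c).cexp :)⟩ (fun w hw => ?_) hz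
      have him : (g w).im = 0 := hb w hw
      have : (c * g w).re = 0 := by
        rw [Complex.mul_re, him, hc]; ring
      rw [Complex.norm_exp]
      show Real.exp (c * g w).re ≤ 1
      rw [this, Real.exp_zero]
    intro z hz
    have h1 := key Complex.I (by simp) z hz
    have h2 := key (-Complex.I) (by simp) z hz
    rw [Complex.norm_exp] at h1 h2
    rw [← Real.exp_zero] at h1 h2
    have h1' := (Real.exp_le_exp.mp h1)
    have h2' := (Real.exp_le_exp.mp h2)
    simp only [Complex.mul_re, Complex.I_re, Complex.I_im, Complex.neg_re, Complex.neg_im] at h1' h2'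
    nlinarith [h1', h2']
  -- Step B: the derivative of g vanishes on R
  have hderiv0 : ∀ z ∈ R, HasDerivAt g 0 z := by
    intro z hz
    have hdz : DifferentiableAt ℂ f z :=
      (hd.differentiableOn z hz).differentiableAt (hRopen.mem_nhds hz)
    have hgz : DifferentiableAt ℂ g z := hdz.pow 2
    obtain ⟨c, hgder⟩ : ∃ c, HasDerivAt g c z := ⟨_, hgz.hasDerivAt⟩
    have hL : HasFDerivAt g
        (((ContinuousLinearMap.id ℂ ℂ).smulRight c).restrictScalars ℝ) z :=
      hgder.hasFDerivAt.restrictScalars ℝ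
    have dir : ∀ w : ℂ, (w * c).im = 0 := by
      intro w
      have hp : HasDerivAt (fun t : ℝ => z + t • w) w 0 := by
        simpa using (((hasDerivAt_id (0 : ℝ)).smul_const w).const_add z)
      have hcmp : HasDerivAt (fun t : ℝ => g (z + t • w)) (w * c) 0 := by
        have hz0' : z + (0 : ℝ) • w = z := by simp
        have hL2 := hL
        rw [← hz0'] at hL2
        have := hL2.comp_hasDerivAt 0 hp
        simpa [smul_eq_mul, mul_comm, Function.comp_def] using this
      have hcmpim : HasDerivAt (fun t : ℝ => (g (z + t • w)).im) (w * c).im 0 := by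
        have := Complex.imCLM.hasFDerivAt.comp_hasDerivAt 0 hcmp
        simpa [smul_eq_mul, Function.comp_def] using this
      have hev : (fun t : ℝ => (g (z + t • w)).im) =ᶠ[𝓝 (0 : ℝ)] fun _ => 0 := by
        have hcont : Continuous fun t : ℝ => z + t • w := by continuity
        have : ∀ᶠ t : ℝ in 𝓝 0, z + t • w ∈ R := by
          have : (fun t : ℝ => z + t • w) ⁻¹' R ∈ 𝓝 (0 : ℝ) :=
            hcont.continuousAt.preimage_mem_nhds (by simpa using hRopen.mem_nhds hz)
          exact this
        filter_upwards [this] with t ht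
        exact himA _ (subset_closure ht)
      have h0 : HasDerivAt (fun t : ℝ => (g (z + t • w)).im) 0 0 :=
        (hasDerivAt_const (0 : ℝ) (0 : ℝ)).congr_of_eventuallyEq hev
      have := h0.unique hcmpim
      linarith [this]
    have hcim : c.im = 0 := by simpa using dir 1
    have hcre : c.re = 0 := by
      have := dir Complex.I
      simpa [Complex.mul_im] using this
    have hc0 : c = 0 := Complex.ext hcre hcim
    rwa [hc0] at hgder
  -- Step C: g is constant on R
  have hconst : ∀ x ∈ R, ∀ y ∈ R, g x = g y := by
    intro x hx y hy
    refine (convex_crect a).is_const_of_fderivWithin_eq_zero hgd (fun w hw => ?_) hx hy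
    rw [fderivWithin_of_isOpen hRopen hw, (hderiv0 w hw).hasFDerivAt.fderiv]
    ext u
    simp
  -- Step D: g equals its value at 0 everywhere on the closure
  have h0R : (0 : ℂ) ∈ R := by
    constructor <;> simp [ha] <;> norm_num
  have hclosval : ∀ z ∈ closure R, g z = g 0 := by
    intro z hz
    have hne : (𝓝[R] z).NeBot := mem_closure_iff_nhdsWithin_neBot.1 hz
    have h1 : Tendsto g (𝓝[R] z) (𝓝 (g z)) :=
      (hgc z hz).mono_left (nhdsWithin_mono z subset_closure)
    have h2 : Tendsto g (𝓝[R] z) (𝓝 (g 0)) := by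
      refine Tendsto.congr' ?_ tendsto_const_nhds
      exact eventually_nhdsWithin_of_forall fun w hw => (hconst 0 h0R w hw).symm ▸ rfl
    exact tendsto_nhds_unique h1 h2
  -- corner gives the constant is 0
  have hz0 : (⟨a, 1⟩ : ℂ) ∈ closure R := by
    rw [hclos]
    constructor <;> simp [le_of_lt ha]
  have hg0 : g 0 = 0 := by
    have h := hclosval _ hz0
    show f 0 ^ 2 = 0
    have h' : f (⟨a, 1⟩ : ℂ) ^ 2 = f 0 ^ 2 := h
    rw [← h', hcorner]
    ring
  intro z hz
  have hgz0 : f z ^ 2 = 0 := by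
    have := hclosval z (hclos ▸ hz)
    rw [hg0] at this
    exact this
  exact pow_eq_zero_iff (by norm_num : (2 : ℕ) ≠ 0) |>.mp hgz0

lemma sq_im (w : ℂ) : (w ^ 2).im = 2 * w.re * w.im := by
  simp [pow_two, Complex.mul_im]; ring

lemma clm_eval (L : ℝ × ℝ →L[ℝ] ℝ) (x y : ℝ) :
    L (x, y) = x * L (1, 0) + y * L (0, 1) := by
  have h : (x, y) = x • ((1 : ℝ), (0 : ℝ)) + y • ((0 : ℝ), (1 : ℝ)) := by
    simp [Prod.ext_iff]
  rw [h, map_add, map_smul, map_smul, smul_eq_mul, smul_eq_mul]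

/-- Partial derivative in the first variable of a function on ℝ². -/
def qd1 (f : ℝ × ℝ → ℝ) (p : ℝ × ℝ) : ℝ := deriv (fun s => f (s, p.2)) p.1

/-- Partial derivative in the second variable of a function on ℝ². -/
def qd2 (f : ℝ × ℝ → ℝ) (p : ℝ × ℝ) : ℝ := deriv (fun s => f (p.1, s)) p.2

lemma qd_eq {F : ℝ × ℝ → ℝ} {L : ℝ × ℝ →L[ℝ] ℝ} {q : ℝ × ℝ} (hF : HasFDerivAt F L q) :
    qd1 F q = L (1, 0) ∧ qd2 F q = L (0, 1) := by
  have hF' : HasFDerivAt F L (q.1, q.2) := by rwa [Prod.mk.eta]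
  constructor
  · have hcurve : HasDerivAt (fun s : ℝ => (s, q.2)) ((1 : ℝ), (0 : ℝ)) q.1 :=
      (hasDerivAt_id q.1).prodMk (hasDerivAt_const _ _)
    exact (hF'.comp_hasDerivAt q.1 hcurve).deriv
  · have hcurve : HasDerivAt (fun s : ℝ => (q.1, s)) ((0 : ℝ), (1 : ℝ)) q.2 :=
      (hasDerivAt_const _ _).prodMk (hasDerivAt_id q.2)
    exact (hF'.comp_hasDerivAt q.2 hcurve).deriv

lemma cr_differentiable {θ0 rs : ℝ} (hrs : 0 < rs) {F2 F3 : ℝ × ℝ → ℝ}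
    (hF2 : ContDiffOn ℝ 1 F2 (Set.Icc (-θ0) θ0 ×ˢ Set.Icc (-1 : ℝ) 1))
    (hF3 : ContDiffOn ℝ 1 F3 (Set.Icc (-θ0) θ0 ×ˢ Set.Icc (-1 : ℝ) 1))
    {q : ℝ × ℝ} (hq : q ∈ Set.Ioo (-θ0) θ0 ×ˢ Set.Ioo (-1 : ℝ) 1)
    (h1 : (1 / rs) * qd1 F3 q - qd2 F2 q = 0)
    (h2 : (1 / rs) * qd1 F2 q + qd2 F3 q = 0)
    {z : ℂ} (hz : (rs⁻¹ * z.re, z.im) = q) :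
    DifferentiableAt ℂ
      (fun w : ℂ => (F3 (rs⁻¹ * w.re, w.im) : ℂ) + F2 (rs⁻¹ * w.re, w.im) • Complex.I) z := by
  have hnq : Set.Icc (-θ0) θ0 ×ˢ Set.Icc (-1 : ℝ) 1 ∈ 𝓝 q :=
    Filter.mem_of_superset ((isOpen_Ioo.prod isOpen_Ioo).mem_nhds hq)
      (Set.prod_mono Set.Ioo_subset_Icc_self Set.Ioo_subset_Icc_self)
  have hF2q : DifferentiableAt ℝ F2 q := ((hF2.contDiffAt hnq).differentiableAt one_ne_zero)
  have hF3q : DifferentiableAt ℝ F3 q := ((hF3.contDiffAt hnq).differentiableAt one_ne_zero)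
  set A : ℝ × ℝ →L[ℝ] ℝ := fderiv ℝ F3 q with hAdef
  set B : ℝ × ℝ →L[ℝ] ℝ := fderiv ℝ F2 q with hBdef
  have hA : HasFDerivAt F3 A q := hF3q.hasFDerivAt
  have hB : HasFDerivAt F2 B q := hF2q.hasFDerivAt
  -- the PDE in terms of A and B
  have hqa := qd_eq hA
  have hqb := qd_eq hB
  rw [hqa.1, hqb.2] at h1
  rw [hqb.1, hqa.2] at h2
  -- the real-linear map z ↦ (rs⁻¹ z.re, z.im)
  set G : ℂ →L[ℝ] ℝ × ℝ := (rs⁻¹ • Complex.reCLM).prod Complex.imCLM with hGdef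
  have hGapp : ∀ w : ℂ, G w = (rs⁻¹ * w.re, w.im) := fun w => rfl
  have hGd : HasFDerivAt (fun w : ℂ => (rs⁻¹ * w.re, w.im)) G z := G.hasFDerivAt
  have hA' : HasFDerivAt F3 A (rs⁻¹ * z.re, z.im) := by rwa [hz]
  have hB' : HasFDerivAt F2 B (rs⁻¹ * z.re, z.im) := by rwa [hz]
  have hcomp3 : HasFDerivAt (fun w : ℂ => F3 (rs⁻¹ * w.re, w.im)) (A.comp G) z :=
    hA'.comp z hGd
  have hcomp2 : HasFDerivAt (fun w : ℂ => F2 (rs⁻¹ * w.re, w.im)) (B.comp G) z :=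
    hB'.comp z hGd
  have hof3 : HasFDerivAt (fun w : ℂ => (F3 (rs⁻¹ * w.re, w.im) : ℂ))
      (Complex.ofRealCLM.comp (A.comp G)) z := Complex.ofRealCLM.hasFDerivAt.comp z hcomp3
  have hsm2 : HasFDerivAt (fun w : ℂ => F2 (rs⁻¹ * w.re, w.im) • Complex.I)
      ((B.comp G).smulRight Complex.I) z := hcomp2.smul_const Complex.I
  have hL : HasFDerivAt
      (fun w : ℂ => (F3 (rs⁻¹ * w.re, w.im) : ℂ) + F2 (rs⁻¹ * w.re, w.im) • Complex.I)
      (Complex.ofRealCLM.comp (A.comp G) + (B.comp G).smulRight Complex.I) z := hof3.add hsm2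
  -- the complex derivative
  set d : ℂ := ⟨rs⁻¹ * A (1, 0), rs⁻¹ * B (1, 0)⟩ with hddef
  have hrestrict : (((ContinuousLinearMap.id ℂ ℂ).smulRight d).restrictScalars ℝ) =
      Complex.ofRealCLM.comp (A.comp G) + (B.comp G).smulRight Complex.I := by
    refine ContinuousLinearMap.ext fun w => ?_
    have hval : ∀ L : ℝ × ℝ →L[ℝ] ℝ,
        L (rs⁻¹ * w.re, w.im) = (rs⁻¹ * w.re) * L (1, 0) + w.im * L (0, 1) :=
      fun L => clm_eval L _ _
    have hlhs : (((ContinuousLinearMap.id ℂ ℂ).smulRight d).restrictScalars ℝ) w = w * d := by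
      simp [ContinuousLinearMap.smulRight_apply, smul_eq_mul, mul_comm]
    have hrhs : (Complex.ofRealCLM.comp (A.comp G) + (B.comp G).smulRight Complex.I) w =
        (A (rs⁻¹ * w.re, w.im) : ℂ) + (B (rs⁻¹ * w.re, w.im)) • Complex.I := by
      simp [ContinuousLinearMap.smulRight_apply, hGapp]
    rw [hlhs, hrhs, hval A, hval B]
    have hA01 : A (0, 1) = -(rs⁻¹ * B (1, 0)) := by
      linear_combination h2
    have hB01 : B (0, 1) = rs⁻¹ * A (1, 0) := by
      linear_combination -h1
    rw [hA01, hB01]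
    apply Complex.ext <;>
      simp [hddef, Complex.mul_re, Complex.mul_im, Complex.add_re, Complex.add_im,
        Complex.real_smul, Complex.ofReal_mul] <;> ring
  exact ⟨_, hasFDerivAt_of_restrictScalars ℝ hL hrestrict⟩

/-- Lemma 2.2: for `F₂, F₃ ∈ C¹(Ē)` on the rectangle `Ē = [-θ₀,θ₀]×[-1,1]`,
`F₂ ≡ F₃ ≡ 0` on `Ē` is equivalent to the first-order boundary value problem
`(1/r_s)∂_{y₂}F₃ - ∂_{y₃}F₂ = 0`, `(1/r_s)∂_{y₂}F₂ + ∂_{y₃}F₃ = 0` in `E`,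
with `F₂(±θ₀,·) = 0` and `F₃(·,±1) = 0`. -/
theorem steady_MHD_shock_jump_reformulation
    (θ0 rs : ℝ) (hθ0 : 0 < θ0) (hθ0' : θ0 < Real.pi / 2) (hrs : 0 < rs)
    (F2 F3 : ℝ × ℝ → ℝ)
    (hF2 : ContDiffOn ℝ 1 F2 (Set.Icc (-θ0) θ0 ×ˢ Set.Icc (-1 : ℝ) 1))
    (hF3 : ContDiffOn ℝ 1 F3 (Set.Icc (-θ0) θ0 ×ˢ Set.Icc (-1 : ℝ) 1)) :
    (∀ p ∈ Set.Icc (-θ0) θ0 ×ˢ Set.Icc (-1 : ℝ) 1, F2 p = 0 ∧ F3 p = 0) ↔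
      ((∀ p ∈ Set.Ioo (-θ0) θ0 ×ˢ Set.Ioo (-1 : ℝ) 1,
          (1 / rs) * qd1 F3 p - qd2 F2 p = 0) ∧
        (∀ p ∈ Set.Ioo (-θ0) θ0 ×ˢ Set.Ioo (-1 : ℝ) 1,
          (1 / rs) * qd1 F2 p + qd2 F3 p = 0) ∧
        (∀ y3 ∈ Set.Icc (-1 : ℝ) 1, F2 (θ0, y3) = 0 ∧ F2 (-θ0, y3) = 0) ∧
        (∀ y2 ∈ Set.Icc (-θ0) θ0, F3 (y2, 1) = 0 ∧ F3 (y2, -1) = 0)) := by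
  constructor
  · -- easy direction
    intro h
    have hqd : ∀ F : ℝ × ℝ → ℝ, (∀ p ∈ Set.Icc (-θ0) θ0 ×ˢ Set.Icc (-1 : ℝ) 1, F p = 0) →
        ∀ p ∈ Set.Ioo (-θ0) θ0 ×ˢ Set.Ioo (-1 : ℝ) 1, qd1 F p = 0 ∧ qd2 F p = 0 := by
      intro F hF p hp
      constructor
      · have hev : (fun s => F (s, p.2)) =ᶠ[nhds p.1] fun _ => (0 : ℝ) := by
          filter_upwards [isOpen_Ioo.mem_nhds hp.1] with s hs
          exact hF (s, p.2) ⟨Set.Ioo_subset_Icc_self hs, Set.Ioo_subset_Icc_self hp.2⟩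
        show deriv _ _ = 0
        rw [hev.deriv_eq, deriv_const]
      · have hev : (fun s => F (p.1, s)) =ᶠ[nhds p.2] fun _ => (0 : ℝ) := by
          filter_upwards [isOpen_Ioo.mem_nhds hp.2] with s hs
          exact hF (p.1, s) ⟨Set.Ioo_subset_Icc_self hp.1, Set.Ioo_subset_Icc_self hs⟩
        show deriv _ _ = 0
        rw [hev.deriv_eq, deriv_const]
    have h2 := hqd F2 (fun p hp => (h p hp).1)
    have h3 := hqd F3 (fun p hp => (h p hp).2)
    refine ⟨fun p hp => ?_, fun p hp => ?_, fun y3 hy3 => ?_, fun y2 hy2 => ?_⟩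
    · rw [(h3 p hp).1, (h2 p hp).2]; ring
    · rw [(h2 p hp).1, (h3 p hp).2]; ring
    · exact ⟨(h (θ0, y3) ⟨⟨(by linarith : -θ0 ≤ θ0), le_rfl⟩, hy3⟩).1,
        (h (-θ0, y3) ⟨⟨le_rfl, (by linarith : -θ0 ≤ θ0)⟩, hy3⟩).1⟩
    · exact ⟨(h (y2, 1) ⟨hy2, ⟨(by norm_num : (-1:ℝ) ≤ 1), le_rfl⟩⟩).2,
        (h (y2, -1) ⟨hy2, ⟨le_rfl, (by norm_num : (-1:ℝ) ≤ 1)⟩⟩).2⟩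
  · rintro ⟨heq1, heq2, hbc2, hbc3⟩ p hp
    set a : ℝ := rs * θ0 with hadef
    have ha : 0 < a := mul_pos hrs hθ0
    have hinva : rs⁻¹ * a = θ0 := inv_mul_cancel_left₀ hrs.ne' θ0
    set gm : ℂ → ℝ × ℝ := fun z => (rs⁻¹ * z.re, z.im) with hgm
    set f : ℂ → ℂ := fun z => (F3 (gm z) : ℂ) + F2 (gm z) • Complex.I with hf
    set R : Set ℂ := Set.Ioo (-a) a ×ℂ Set.Ioo (-1 : ℝ) 1 with hRdef
    have hsc_le : ∀ x : ℝ, x ∈ Set.Icc (-a) a → rs⁻¹ * x ∈ Set.Icc (-θ0) θ0 := by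
      intro x hx
      constructor
      · have := mul_le_mul_of_nonneg_left hx.1 (inv_pos.mpr hrs).le
        rw [hadef] at this
        rw [mul_neg, inv_mul_cancel_left₀ hrs.ne'] at this
        exact this
      · have := mul_le_mul_of_nonneg_left hx.2 (inv_pos.mpr hrs).le
        rw [hadef] at this
        rw [inv_mul_cancel_left₀ hrs.ne'] at this
        exact this
    have hsc_lt : ∀ x : ℝ, x ∈ Set.Ioo (-a) a → rs⁻¹ * x ∈ Set.Ioo (-θ0) θ0 := by
      intro x hx
      constructor
      · have := mul_lt_mul_of_pos_left hx.1 (inv_pos.mpr hrs)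
        rw [hadef, mul_neg, inv_mul_cancel_left₀ hrs.ne'] at this
        exact this
      · have := mul_lt_mul_of_pos_left hx.2 (inv_pos.mpr hrs)
        rw [hadef, inv_mul_cancel_left₀ hrs.ne'] at this
        exact this
    have hmem : ∀ z ∈ R, gm z ∈ Set.Ioo (-θ0) θ0 ×ˢ Set.Ioo (-1 : ℝ) 1 := by
      intro z hz
      obtain ⟨hre, him⟩ := Complex.mem_reProdIm.mp hz
      exact ⟨hsc_lt z.re hre, him⟩
    have hmemIcc : ∀ z ∈ Set.Icc (-a) a ×ℂ Set.Icc (-1 : ℝ) 1,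
        gm z ∈ Set.Icc (-θ0) θ0 ×ˢ Set.Icc (-1 : ℝ) 1 := by
      intro z hz
      obtain ⟨hre, him⟩ := Complex.mem_reProdIm.mp hz
      exact ⟨hsc_le z.re hre, him⟩
    -- differentiability on the open rectangle
    have hdiff : DifferentiableOn ℂ f R := by
      intro z hz
      exact (cr_differentiable hrs hF2 hF3 (hmem z hz)
        (heq1 _ (hmem z hz)) (heq2 _ (hmem z hz)) rfl).differentiableWithinAt
    -- continuity up to the boundary
    have hcont : ContinuousOn f (Set.Icc (-a) a ×ℂ Set.Icc (-1 : ℝ) 1) := by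
      have hgmc : Continuous gm :=
        (continuous_const.mul Complex.continuous_re).prodMk Complex.continuous_im
      have h3 : ContinuousOn (fun z => F3 (gm z)) (Set.Icc (-a) a ×ℂ Set.Icc (-1 : ℝ) 1) :=
        hF3.continuousOn.comp hgmc.continuousOn hmemIcc
      have h2 : ContinuousOn (fun z => F2 (gm z)) (Set.Icc (-a) a ×ℂ Set.Icc (-1 : ℝ) 1) :=
        hF2.continuousOn.comp hgmc.continuousOn hmemIcc
      exact (Complex.continuous_ofReal.comp_continuousOn h3).add (h2.smul continuousOn_const)
    -- real and imaginary parts of f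
    have hre : ∀ z : ℂ, (f z).re = F3 (gm z) := by
      intro z
      simp [hf, Complex.real_smul]
    have him : ∀ z : ℂ, (f z).im = F2 (gm z) := by
      intro z
      simp [hf, Complex.real_smul]
    -- boundary condition for the square
    have hRopen : IsOpen R := isOpen_Ioo.reProdIm isOpen_Ioo
    have hfr : ∀ z ∈ frontier R, (f z ^ 2).im = 0 := by
      intro z hz
      rw [hRopen.frontier_eq, closure_crect ha] at hz
      obtain ⟨hcl, hnR⟩ := hz
      obtain ⟨hzre, hzim⟩ := Complex.mem_reProdIm.mp hcl
      rw [sq_im]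
      by_cases hcase : z.re = a ∨ z.re = -a
      · -- vertical sides : F2 vanishes
        have hF2z : F2 (gm z) = 0 := by
          rcases hcase with h | h
          · have : gm z = (θ0, z.im) := by
              rw [hgm]; simp only [h, hinva]
            rw [this]
            exact (hbc2 z.im hzim).1
          · have : gm z = (-θ0, z.im) := by
              rw [hgm]; simp only [h, mul_neg, hinva]
            rw [this]
            exact (hbc2 z.im hzim).2
        rw [him z, hF2z]
        ring
      · -- horizontal sides : F3 vanishes
        push_neg at hcase
        have hzreIoo : z.re ∈ Set.Ioo (-a) a := by
          rcases lt_or_eq_of_le hzre.1 with h | h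
          · rcases lt_or_eq_of_le hzre.2 with h' | h'
            · exact ⟨h, h'⟩
            · exact absurd h' hcase.1
          · exact absurd h.symm hcase.2
        have hzimne : z.im = 1 ∨ z.im = -1 := by
          by_contra hc
          push_neg at hc
          apply hnR
          refine Complex.mem_reProdIm.mpr ⟨hzreIoo, ?_⟩
          rcases lt_or_eq_of_le hzim.1 with h | h
          · rcases lt_or_eq_of_le hzim.2 with h' | h'
            · exact ⟨h, h'⟩
            · exact absurd h' hc.1
          · exact absurd h.symm hc.2
        have hF3z : F3 (gm z) = 0 := by
          have hy2 : rs⁻¹ * z.re ∈ Set.Icc (-θ0) θ0 := hsc_le z.re hzre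
          rcases hzimne with h | h
          · have : gm z = (rs⁻¹ * z.re, 1) := by rw [hgm]; simp only [h]
            rw [this]
            exact (hbc3 _ hy2).1
          · have : gm z = (rs⁻¹ * z.re, -1) := by rw [hgm]; simp only [h]
            rw [this]
            exact (hbc3 _ hy2).2
        rw [hre z, hF3z]
        ring
    -- corner value
    have hcorner : f ⟨a, 1⟩ = 0 := by
      have hgz : gm ⟨a, 1⟩ = (θ0, 1) := by
        rw [hgm]; simp only [hinva]
      rw [hf]
      simp only [hgz]
      rw [(hbc3 θ0 ⟨by linarith, le_rfl⟩).1, (hbc2 1 ⟨by norm_num, le_rfl⟩).1]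
      simp
    -- apply the uniqueness lemma
    have hall := crect_key ha ⟨hdiff, by rw [closure_crect ha]; exact hcont⟩ hfr hcorner
    set z : ℂ := ⟨rs * p.1, p.2⟩ with hzdef
    have hzmem : z ∈ Set.Icc (-a) a ×ℂ Set.Icc (-1 : ℝ) 1 := by
      refine Complex.mem_reProdIm.mpr ⟨⟨?_, ?_⟩, hp.2⟩
      · have := mul_le_mul_of_nonneg_left hp.1.1 hrs.le
        rw [mul_neg] at this
        exact this
      · exact mul_le_mul_of_nonneg_left hp.1.2 hrs.le
    have hgmp : gm z = p := by
      rw [hgm]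
      have : rs⁻¹ * (rs * p.1) = p.1 := inv_mul_cancel_left₀ hrs.ne' p.1
      simp only [hzdef, this]
    have hfz := hall z hzmem
    rw [hf] at hfz
    simp only [hgmp] at hfz
    rw [Complex.ext_iff] at hfz
    simp only [Complex.add_re, Complex.add_im, Complex.ofReal_re, Complex.ofReal_im,
      Complex.real_smul, Complex.mul_re, Complex.mul_im, Complex.I_re, Complex.I_im,
      Complex.zero_re, Complex.zero_im] at hfz
    constructor
    · have := hfz.2; linarith [this]
    · have := hfz.1; linarith [this]
end
end

section
/- Let (ρ, u, S, κ) be a C² solution of the cylindrical steady aligned MHD system on Ω with ρ > 0 and U₁ > 0 in Ω. Then the second and third components of the modified vorticity are determined by the first: J₂ = (1/U₁)(U₂J₁ + ∂_{x₃}B − ((B − |U|²/2)/(γS))∂_{x₃}S − κρ|U|²∂_{x₃}κ) and J₃ = (1/U₁)(U₃J₁ − (1/r)∂_θB + ((B − |U|²/2)/(γS))(1/r)∂_θS + κρ|U|²(1/r)∂_θκ). -/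
noncomputable section

lemma sl1 (f : R3 → ℝ) (x y z : ℝ) (hf : DifferentiableAt ℝ f (x, y, z)) :
    HasDerivAt (fun s => f (s, y, z)) (pd1 f (x, y, z)) x := by
  have hL : HasDerivAt (fun s : ℝ => ((s, y, z) : R3)) ((1:ℝ), (0:ℝ), (0:ℝ)) x :=
    HasDerivAt.prodMk (hasDerivAt_id _) (HasDerivAt.prodMk (hasDerivAt_const _ _) (hasDerivAt_const _ _))
  exact (hf.comp x hL.differentiableAt).hasDerivAt

lemma sl2 (f : R3 → ℝ) (x y z : ℝ) (hf : DifferentiableAt ℝ f (x, y, z)) :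
    HasDerivAt (fun s => f (x, s, z)) (pd2 f (x, y, z)) y := by
  have hL : HasDerivAt (fun s : ℝ => ((x, s, z) : R3)) ((0:ℝ), (1:ℝ), (0:ℝ)) y :=
    HasDerivAt.prodMk (hasDerivAt_const _ _) (HasDerivAt.prodMk (hasDerivAt_id _) (hasDerivAt_const _ _))
  exact (hf.comp y hL.differentiableAt).hasDerivAt

lemma sl3 (f : R3 → ℝ) (x y z : ℝ) (hf : DifferentiableAt ℝ f (x, y, z)) :
    HasDerivAt (fun s => f (x, y, s)) (pd3 f (x, y, z)) z := by
  have hL : HasDerivAt (fun s : ℝ => ((x, y, s) : R3)) ((0:ℝ), (0:ℝ), (1:ℝ)) z :=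
    HasDerivAt.prodMk (hasDerivAt_const _ _) (HasDerivAt.prodMk (hasDerivAt_const _ _) (hasDerivAt_id _))
  exact (hf.comp z hL.differentiableAt).hasDerivAt

set_option maxHeartbeats 4000000 in
/-- For a C² solution of the cylindrical steady aligned MHD system with `ρ > 0` and
`U₁ > 0`, the second and third components of the modified vorticity are determined
algebraically by the first component (equations (2.3) of the paper). -/
theorem modified_vorticity_J2_J3_formulas
    (γ r1 r2 θ0 : ℝ) (hγ : 1 < γ) (hr1 : 0 < r1) (hr12 : r1 < r2)
    (hθ0 : 0 < θ0) (hθ0' : θ0 < Real.pi / 2)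
    (ρ U1 U2 U3 S κ : R3 → ℝ)
    (hreg : ContDiffOn ℝ 2 ρ (Cyl r1 r2 θ0) ∧ ContDiffOn ℝ 2 U1 (Cyl r1 r2 θ0) ∧
      ContDiffOn ℝ 2 U2 (Cyl r1 r2 θ0) ∧ ContDiffOn ℝ 2 U3 (Cyl r1 r2 θ0) ∧
      ContDiffOn ℝ 2 S (Cyl r1 r2 θ0) ∧ ContDiffOn ℝ 2 κ (Cyl r1 r2 θ0))
    (hρ : ∀ p ∈ Cyl r1 r2 θ0, 0 < ρ p) (hU1 : ∀ p ∈ Cyl r1 r2 θ0, 0 < U1 p)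
    (hS : ∀ p ∈ Cyl r1 r2 θ0, 0 < S p)
    (hsol : ∀ p ∈ Cyl r1 r2 θ0, CylMHD γ ρ U1 U2 U3 S κ p) :
    ∀ p ∈ Cyl r1 r2 θ0,
      mJ2 ρ U1 U3 κ p
        = (1 / U1 p) * (U2 p * mJ1 ρ U2 U3 κ p
            + pd3 (Bern γ ρ U1 U2 U3 S) p
            - (Bern γ ρ U1 U2 U3 S p - (U1 p ^ 2 + U2 p ^ 2 + U3 p ^ 2) / 2)
                / (γ * S p) * pd3 S p
            - κ p * ρ p * (U1 p ^ 2 + U2 p ^ 2 + U3 p ^ 2) * pd3 κ p) ∧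
      mJ3 ρ U1 U2 κ p
        = (1 / U1 p) * (U3 p * mJ1 ρ U2 U3 κ p
            - (1 / p.1) * pd2 (Bern γ ρ U1 U2 U3 S) p
            + (Bern γ ρ U1 U2 U3 S p - (U1 p ^ 2 + U2 p ^ 2 + U3 p ^ 2) / 2)
                / (γ * S p) * ((1 / p.1) * pd2 S p)
            + κ p * ρ p * (U1 p ^ 2 + U2 p ^ 2 + U3 p ^ 2) * ((1 / p.1) * pd2 κ p)) := by
  rintro ⟨x, y, z⟩ hp
  have hx1 : r1 < x := hp.1.1
  have hxpos : (0:ℝ) < x := lt_trans hr1 hx1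
  have hx0 : x ≠ 0 := ne_of_gt hxpos
  have hρP : 0 < ρ (x, y, z) := hρ _ hp
  have hρ0 : ρ (x, y, z) ≠ 0 := ne_of_gt hρP
  have hU1P : 0 < U1 (x, y, z) := hU1 _ hp
  have hU10 : U1 (x, y, z) ≠ 0 := ne_of_gt hU1P
  have hSP : 0 < S (x, y, z) := hS _ hp
  have hS0 : S (x, y, z) ≠ 0 := ne_of_gt hSP
  have hγ0 : γ ≠ 0 := by positivity
  have hγ1 : γ - 1 ≠ 0 := by intro h; nlinarith
  have hopen : IsOpen (Cyl r1 r2 θ0) := by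
    rw [Cyl]; exact isOpen_Ioo.prod (isOpen_Ioo.prod isOpen_Ioo)
  have hnh : Cyl r1 r2 θ0 ∈ nhds ((x, y, z) : R3) := hopen.mem_nhds hp
  obtain ⟨cR, cU1, cU2, cU3, cS, cK⟩ := hreg
  have dR : DifferentiableAt ℝ ρ (x, y, z) := (cR.contDiffAt hnh).differentiableAt two_ne_zero
  have dU1 : DifferentiableAt ℝ U1 (x, y, z) := (cU1.contDiffAt hnh).differentiableAt two_ne_zero
  have dU2 : DifferentiableAt ℝ U2 (x, y, z) := (cU2.contDiffAt hnh).differentiableAt two_ne_zero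
  have dU3 : DifferentiableAt ℝ U3 (x, y, z) := (cU3.contDiffAt hnh).differentiableAt two_ne_zero
  have dS : DifferentiableAt ℝ S (x, y, z) := (cS.contDiffAt hnh).differentiableAt two_ne_zero
  have dK : DifferentiableAt ℝ κ (x, y, z) := (cK.contDiffAt hnh).differentiableAt two_ne_zero
  have hR1 := sl1 ρ x y z dR
  have hR2 := sl2 ρ x y z dR
  have hR3 := sl3 ρ x y z dR
  have hU11 := sl1 U1 x y z dU1
  have hU12 := sl2 U1 x y z dU1
  have hU13 := sl3 U1 x y z dU1
  have hU21 := sl1 U2 x y z dU2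
  have hU22 := sl2 U2 x y z dU2
  have hU23 := sl3 U2 x y z dU2
  have hU31 := sl1 U3 x y z dU3
  have hU32 := sl2 U3 x y z dU3
  have hU33 := sl3 U3 x y z dU3
  have hS1 := sl1 S x y z dS
  have hS2 := sl2 S x y z dS
  have hS3 := sl3 S x y z dS
  have hK1 := sl1 κ x y z dK
  have hK2 := sl2 κ x y z dK
  have hK3 := sl3 κ x y z dK
  have hGg : ρ (x, y, z) ^ γ = ρ (x, y, z) ^ (γ - 1) * ρ (x, y, z) := by
    rw [show γ = (γ - 1) + 1 by ring, Real.rpow_add_one hρ0]; ring_nf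
  have hg2 : ρ (x, y, z) ^ (γ - 1 - 1) = ρ (x, y, z) ^ (γ - 1) / ρ (x, y, z) := by
    rw [eq_div_iff hρ0, ← Real.rpow_add_one hρ0]; ring_nf
  have hkru21 : pd1 (fun q => κ q * ρ q * U2 q) (x, y, z)
      = (pd1 κ (x, y, z) * ρ (x, y, z) + κ (x, y, z) * pd1 ρ (x, y, z)) * U2 (x, y, z) + κ (x, y, z) * ρ (x, y, z) * pd1 U2 (x, y, z) :=
    ((hK1.mul hR1).mul hU21).deriv.trans (by simp only [Pi.mul_apply])
  have hkru12 : pd2 (fun q => κ q * ρ q * U1 q) (x, y, z)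
      = (pd2 κ (x, y, z) * ρ (x, y, z) + κ (x, y, z) * pd2 ρ (x, y, z)) * U1 (x, y, z) + κ (x, y, z) * ρ (x, y, z) * pd2 U1 (x, y, z) :=
    ((hK2.mul hR2).mul hU12).deriv.trans (by simp only [Pi.mul_apply])
  have hkru32 : pd2 (fun q => κ q * ρ q * U3 q) (x, y, z)
      = (pd2 κ (x, y, z) * ρ (x, y, z) + κ (x, y, z) * pd2 ρ (x, y, z)) * U3 (x, y, z) + κ (x, y, z) * ρ (x, y, z) * pd2 U3 (x, y, z) :=
    ((hK2.mul hR2).mul hU32).deriv.trans (by simp only [Pi.mul_apply])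
  have hkru23 : pd3 (fun q => κ q * ρ q * U2 q) (x, y, z)
      = (pd3 κ (x, y, z) * ρ (x, y, z) + κ (x, y, z) * pd3 ρ (x, y, z)) * U2 (x, y, z) + κ (x, y, z) * ρ (x, y, z) * pd3 U2 (x, y, z) :=
    ((hK3.mul hR3).mul hU23).deriv.trans (by simp only [Pi.mul_apply])
  have hkru13 : pd3 (fun q => κ q * ρ q * U1 q) (x, y, z)
      = (pd3 κ (x, y, z) * ρ (x, y, z) + κ (x, y, z) * pd3 ρ (x, y, z)) * U1 (x, y, z) + κ (x, y, z) * ρ (x, y, z) * pd3 U1 (x, y, z) :=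
    ((hK3.mul hR3).mul hU13).deriv.trans (by simp only [Pi.mul_apply])
  have hkru31 : pd1 (fun q => κ q * ρ q * U3 q) (x, y, z)
      = (pd1 κ (x, y, z) * ρ (x, y, z) + κ (x, y, z) * pd1 ρ (x, y, z)) * U3 (x, y, z) + κ (x, y, z) * ρ (x, y, z) * pd1 U3 (x, y, z) :=
    ((hK1.mul hR1).mul hU31).deriv.trans (by simp only [Pi.mul_apply])
  have hw32 : pd2 (fun q => (1 - κ q ^ 2 * ρ q) * U3 q) (x, y, z)
      = -(2 * κ (x, y, z) * pd2 κ (x, y, z) * ρ (x, y, z) + κ (x, y, z) ^ 2 * pd2 ρ (x, y, z)) * U3 (x, y, z)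
        + (1 - κ (x, y, z) ^ 2 * ρ (x, y, z)) * pd2 U3 (x, y, z) :=
    (((hasDerivAt_const _ _).sub ((hK2.pow 2).mul hR2)).mul hU32).deriv.trans
      (by simp only [Pi.mul_apply, Pi.pow_apply, Pi.sub_apply]; push_cast; ring)
  have hw23 : pd3 (fun q => (1 - κ q ^ 2 * ρ q) * U2 q) (x, y, z)
      = -(2 * κ (x, y, z) * pd3 κ (x, y, z) * ρ (x, y, z) + κ (x, y, z) ^ 2 * pd3 ρ (x, y, z)) * U2 (x, y, z)
        + (1 - κ (x, y, z) ^ 2 * ρ (x, y, z)) * pd3 U2 (x, y, z) :=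
    (((hasDerivAt_const _ _).sub ((hK3.pow 2).mul hR3)).mul hU23).deriv.trans
      (by simp only [Pi.mul_apply, Pi.pow_apply, Pi.sub_apply]; push_cast; ring)
  have hw13 : pd3 (fun q => (1 - κ q ^ 2 * ρ q) * U1 q) (x, y, z)
      = -(2 * κ (x, y, z) * pd3 κ (x, y, z) * ρ (x, y, z) + κ (x, y, z) ^ 2 * pd3 ρ (x, y, z)) * U1 (x, y, z)
        + (1 - κ (x, y, z) ^ 2 * ρ (x, y, z)) * pd3 U1 (x, y, z) :=
    (((hasDerivAt_const _ _).sub ((hK3.pow 2).mul hR3)).mul hU13).deriv.trans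
      (by simp only [Pi.mul_apply, Pi.pow_apply, Pi.sub_apply]; push_cast; ring)
  have hw31 : pd1 (fun q => (1 - κ q ^ 2 * ρ q) * U3 q) (x, y, z)
      = -(2 * κ (x, y, z) * pd1 κ (x, y, z) * ρ (x, y, z) + κ (x, y, z) ^ 2 * pd1 ρ (x, y, z)) * U3 (x, y, z)
        + (1 - κ (x, y, z) ^ 2 * ρ (x, y, z)) * pd1 U3 (x, y, z) :=
    (((hasDerivAt_const _ _).sub ((hK1.pow 2).mul hR1)).mul hU31).deriv.trans
      (by simp only [Pi.mul_apply, Pi.pow_apply, Pi.sub_apply]; push_cast; ring)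
  have hw21 : pd1 (fun q => (1 - κ q ^ 2 * ρ q) * U2 q) (x, y, z)
      = -(2 * κ (x, y, z) * pd1 κ (x, y, z) * ρ (x, y, z) + κ (x, y, z) ^ 2 * pd1 ρ (x, y, z)) * U2 (x, y, z)
        + (1 - κ (x, y, z) ^ 2 * ρ (x, y, z)) * pd1 U2 (x, y, z) :=
    (((hasDerivAt_const _ _).sub ((hK1.pow 2).mul hR1)).mul hU21).deriv.trans
      (by simp only [Pi.mul_apply, Pi.pow_apply, Pi.sub_apply]; push_cast; ring)
  have hw12 : pd2 (fun q => (1 - κ q ^ 2 * ρ q) * U1 q) (x, y, z)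
      = -(2 * κ (x, y, z) * pd2 κ (x, y, z) * ρ (x, y, z) + κ (x, y, z) ^ 2 * pd2 ρ (x, y, z)) * U1 (x, y, z)
        + (1 - κ (x, y, z) ^ 2 * ρ (x, y, z)) * pd2 U1 (x, y, z) :=
    (((hasDerivAt_const _ _).sub ((hK2.pow 2).mul hR2)).mul hU12).deriv.trans
      (by simp only [Pi.mul_apply, Pi.pow_apply, Pi.sub_apply]; push_cast; ring)
  have hsg2 : pd2 (fun q => S q * ρ q ^ γ) (x, y, z)
      = pd2 S (x, y, z) * (ρ (x, y, z) ^ (γ - 1) * ρ (x, y, z)) + S (x, y, z) * γ * ρ (x, y, z) ^ (γ - 1) * pd2 ρ (x, y, z) :=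
    (hS2.mul (hR2.rpow_const (Or.inr hγ.le))).deriv.trans (by rw [hGg]; ring)
  have hsg3 : pd3 (fun q => S q * ρ q ^ γ) (x, y, z)
      = pd3 S (x, y, z) * (ρ (x, y, z) ^ (γ - 1) * ρ (x, y, z)) + S (x, y, z) * γ * ρ (x, y, z) ^ (γ - 1) * pd3 ρ (x, y, z) :=
    (hS3.mul (hR3.rpow_const (Or.inr hγ.le))).deriv.trans (by rw [hGg]; ring)
  have hB2 : pd2 (Bern γ ρ U1 U2 U3 S) (x, y, z)
      = (2 * U1 (x, y, z) * pd2 U1 (x, y, z) + 2 * U2 (x, y, z) * pd2 U2 (x, y, z) + 2 * U3 (x, y, z) * pd2 U3 (x, y, z)) / 2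
        + (γ * pd2 S (x, y, z) * ρ (x, y, z) ^ (γ - 1)
            + γ * S (x, y, z) * ((γ - 1) * (ρ (x, y, z) ^ (γ - 1) / ρ (x, y, z)) * pd2 ρ (x, y, z))) / (γ - 1) :=
    (((((hU12.pow 2).add (hU22.pow 2)).add (hU32.pow 2)).div_const 2).add
      ((((HasDerivAt.const_mul γ hS2).mul (hR2.rpow_const (Or.inl hρ0))).div_const (γ - 1)))).deriv.trans
      (by rw [hg2]; push_cast; ring)
  have hB3 : pd3 (Bern γ ρ U1 U2 U3 S) (x, y, z)
      = (2 * U1 (x, y, z) * pd3 U1 (x, y, z) + 2 * U2 (x, y, z) * pd3 U2 (x, y, z) + 2 * U3 (x, y, z) * pd3 U3 (x, y, z)) / 2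
        + (γ * pd3 S (x, y, z) * ρ (x, y, z) ^ (γ - 1)
            + γ * S (x, y, z) * ((γ - 1) * (ρ (x, y, z) ^ (γ - 1) / ρ (x, y, z)) * pd3 ρ (x, y, z))) / (γ - 1) :=
    (((((hU13.pow 2).add (hU23.pow 2)).add (hU33.pow 2)).div_const 2).add
      ((((HasDerivAt.const_mul γ hS3).mul (hR3.rpow_const (Or.inl hρ0))).div_const (γ - 1)))).deriv.trans
      (by rw [hg2]; push_cast; ring)
  have hsys := hsol (x, y, z) hp
  rw [CylMHD] at hsys
  obtain ⟨-, -, e3, e4, -, ek⟩ := hsys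
  simp only [convD] at e3 e4 ek
  rw [hsg2, hkru21, hkru12, hkru32, hkru23] at e3
  rw [hsg3, hkru32, hkru23, hkru13, hkru31] at e4
  field_simp at e3 e4 ek
  constructor
  · rw [mJ2, mJ1, hw13, hw31, hw32, hw23, hB3, Bern]
    linear_combination (norm := (field_simp; ring1)) (-1/(x*ρ (x, y, z)*U1 (x, y, z))) * e4
      + (κ (x, y, z)*ρ (x, y, z)*U3 (x, y, z)/(x*U1 (x, y, z))) * ek
  · rw [mJ3, mJ1, hw21, hw12, hw32, hw23, hB2, Bern]
    linear_combination (norm := (field_simp; ring1)) (1/(x*ρ (x, y, z)*U1 (x, y, z))) * e3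
      + (-1*κ (x, y, z)*ρ (x, y, z)*U2 (x, y, z)/(x*U1 (x, y, z))) * ek
end
end

section
/- Let (ρ, u, S, κ) be a C² solution of the cylindrical steady aligned MHD system on Ω with ρ > 0 and U₁ > 0 in Ω. Then the first component J₁ of the modified vorticity satisfies the first-order transport equation (∂_r + (U₂/U₁)(1/r)∂_θ + (U₃/U₁)∂_{x₃})J₁ + (1/r + (1/r)∂_θ(U₂/U₁) + ∂_{x₃}(U₃/U₁))J₁ + (1/r)∂_θ(1/U₁)∂_{x₃}B − ∂_{x₃}(1/U₁)(1/r)∂_θB − (1/r)∂_θ((B − |U|²/2)/(γSU₁))∂_{x₃}S + ∂_{x₃}((B − |U|²/2)/(γSU₁))(1/r)∂_θS − (1/r)∂_θ(κρ|U|²/U₁)∂_{x₃}κ + ∂_{x₃}(κρ|U|²/U₁)(1/r)∂_θκ = 0. -/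
noncomputable section

namespace Tool
open Filter

def e1 : R3 := (1, 0, 0)
def e2 : R3 := (0, 1, 0)
def e3 : R3 := (0, 0, 1)

lemma hline1 (a b t : ℝ) : HasDerivAt (fun s : ℝ => ((s, a, b) : R3)) e1 t :=
  (hasDerivAt_id t).prodMk ((hasDerivAt_const t a).prodMk (hasDerivAt_const t b))
lemma hline2 (a b t : ℝ) : HasDerivAt (fun s : ℝ => ((a, s, b) : R3)) e2 t :=
  (hasDerivAt_const t a).prodMk ((hasDerivAt_id t).prodMk (hasDerivAt_const t b))
lemma hline3 (a b t : ℝ) : HasDerivAt (fun s : ℝ => ((a, b, s) : R3)) e3 t :=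
  (hasDerivAt_const t a).prodMk ((hasDerivAt_const t b).prodMk (hasDerivAt_id t))

variable {f g h : R3 → ℝ} {q : R3}

lemma hd1 (hf : DifferentiableAt ℝ f q) :
    HasDerivAt (fun s => f (s, q.2.1, q.2.2)) (pd1 f q) q.1 :=
  DifferentiableAt.hasDerivAt <|
    (hf.comp q.1 (hline1 q.2.1 q.2.2 q.1).differentiableAt : _)
lemma hd2 (hf : DifferentiableAt ℝ f q) :
    HasDerivAt (fun s => f (q.1, s, q.2.2)) (pd2 f q) q.2.1 :=
  DifferentiableAt.hasDerivAt <|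
    (hf.comp q.2.1 (hline2 q.1 q.2.2 q.2.1).differentiableAt : _)
lemma hd3 (hf : DifferentiableAt ℝ f q) :
    HasDerivAt (fun s => f (q.1, q.2.1, s)) (pd3 f q) q.2.2 :=
  DifferentiableAt.hasDerivAt <|
    (hf.comp q.2.2 (hline3 q.1 q.2.1 q.2.2).differentiableAt : _)

lemma pd1_fderiv (hf : DifferentiableAt ℝ f q) : pd1 f q = fderiv ℝ f q e1 :=
  (hf.hasFDerivAt.comp_hasDerivAt q.1 (hline1 q.2.1 q.2.2 q.1)).deriv
lemma pd2_fderiv (hf : DifferentiableAt ℝ f q) : pd2 f q = fderiv ℝ f q e2 :=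
  (hf.hasFDerivAt.comp_hasDerivAt q.2.1 (hline2 q.1 q.2.2 q.2.1)).deriv
lemma pd3_fderiv (hf : DifferentiableAt ℝ f q) : pd3 f q = fderiv ℝ f q e3 :=
  (hf.hasFDerivAt.comp_hasDerivAt q.2.2 (hline3 q.1 q.2.1 q.2.2)).deriv

lemma ev_diff (hf : ContDiffAt ℝ 2 f q) : ∀ᶠ x in nhds q, DifferentiableAt ℝ f x :=
  (hf.eventually (by norm_num)).mono fun _ hx => hx.differentiableAt two_ne_zero
lemma ev1 (hf : ContDiffAt ℝ 2 f q) : pd1 f =ᶠ[nhds q] fun x => fderiv ℝ f x e1 :=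
  (ev_diff hf).mono fun _ hx => pd1_fderiv hx
lemma ev2 (hf : ContDiffAt ℝ 2 f q) : pd2 f =ᶠ[nhds q] fun x => fderiv ℝ f x e2 :=
  (ev_diff hf).mono fun _ hx => pd2_fderiv hx
lemma ev3 (hf : ContDiffAt ℝ 2 f q) : pd3 f =ᶠ[nhds q] fun x => fderiv ℝ f x e3 :=
  (ev_diff hf).mono fun _ hx => pd3_fderiv hx

lemma fd_diff (hf : ContDiffAt ℝ 2 f q) (v : R3) :
    DifferentiableAt ℝ (fun x => fderiv ℝ f x v) q := by
  have h1 : ContDiffAt ℝ 1 (fderiv ℝ f) q := hf.fderiv_right (le_refl 2)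
  exact (h1.differentiableAt one_ne_zero).clm_apply (differentiableAt_const v)

lemma pd1_diffAt (hf : ContDiffAt ℝ 2 f q) : DifferentiableAt ℝ (pd1 f) q :=
  (fd_diff hf e1).congr_of_eventuallyEq (ev1 hf)
lemma pd2_diffAt (hf : ContDiffAt ℝ 2 f q) : DifferentiableAt ℝ (pd2 f) q :=
  (fd_diff hf e2).congr_of_eventuallyEq (ev2 hf)
lemma pd3_diffAt (hf : ContDiffAt ℝ 2 f q) : DifferentiableAt ℝ (pd3 f) q :=
  (fd_diff hf e3).congr_of_eventuallyEq (ev3 hf)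

lemma pd_repr_gen (hf : ContDiffAt ℝ 2 f q) (v w : R3)
    (hg : g =ᶠ[nhds q] fun x => fderiv ℝ f x v)
    (ℓ : ℝ → R3) (t : ℝ) (hℓ : HasDerivAt ℓ w t) (hq : ℓ t = q) :
    deriv (fun s => g (ℓ s)) t = fderiv ℝ (fderiv ℝ f) q w v := by
  subst hq
  have hF : DifferentiableAt ℝ (fderiv ℝ f) (ℓ t) :=
    (hf.fderiv_right (le_refl 2)).differentiableAt one_ne_zero
  have hcomp : HasDerivAt (fun s => fderiv ℝ f (ℓ s))
      (fderiv ℝ (fderiv ℝ f) (ℓ t) w) t :=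
    hF.hasFDerivAt.comp_hasDerivAt t hℓ
  have happ : HasDerivAt (fun s => fderiv ℝ f (ℓ s) v)
      (fderiv ℝ (fderiv ℝ f) (ℓ t) w v) t := by
    simpa using hcomp.clm_apply (hasDerivAt_const t v)
  have hde := (hg.comp_tendsto hℓ.continuousAt).deriv_eq
  rw [show (fun s => g (ℓ s)) = g ∘ ℓ from rfl, hde,
    show ((fun x => fderiv ℝ f x v) ∘ ℓ) = fun s => fderiv ℝ f (ℓ s) v from rfl,
    happ.deriv]

lemma pd12_comm (hf : ContDiffAt ℝ 2 f q) : pd1 (pd2 f) q = pd2 (pd1 f) q := by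
  have h1 : pd1 (pd2 f) q = fderiv ℝ (fderiv ℝ f) q e1 e2 :=
    pd_repr_gen hf e2 e1 (ev2 hf) _ q.1 (hline1 q.2.1 q.2.2 q.1) rfl
  have h2 : pd2 (pd1 f) q = fderiv ℝ (fderiv ℝ f) q e2 e1 :=
    pd_repr_gen hf e1 e2 (ev1 hf) _ q.2.1 (hline2 q.1 q.2.2 q.2.1) rfl
  rw [h1, h2]; exact hf.isSymmSndFDerivAt (by simp) e1 e2
lemma pd13_comm (hf : ContDiffAt ℝ 2 f q) : pd1 (pd3 f) q = pd3 (pd1 f) q := by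
  have h1 : pd1 (pd3 f) q = fderiv ℝ (fderiv ℝ f) q e1 e3 :=
    pd_repr_gen hf e3 e1 (ev3 hf) _ q.1 (hline1 q.2.1 q.2.2 q.1) rfl
  have h2 : pd3 (pd1 f) q = fderiv ℝ (fderiv ℝ f) q e3 e1 :=
    pd_repr_gen hf e1 e3 (ev1 hf) _ q.2.2 (hline3 q.1 q.2.1 q.2.2) rfl
  rw [h1, h2]; exact hf.isSymmSndFDerivAt (by simp) e1 e3
lemma pd23_comm (hf : ContDiffAt ℝ 2 f q) : pd2 (pd3 f) q = pd3 (pd2 f) q := by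
  have h1 : pd2 (pd3 f) q = fderiv ℝ (fderiv ℝ f) q e2 e3 :=
    pd_repr_gen hf e3 e2 (ev3 hf) _ q.2.1 (hline2 q.1 q.2.2 q.2.1) rfl
  have h2 : pd3 (pd2 f) q = fderiv ℝ (fderiv ℝ f) q e3 e2 :=
    pd_repr_gen hf e2 e3 (ev2 hf) _ q.2.2 (hline3 q.1 q.2.1 q.2.2) rfl
  rw [h1, h2]; exact hf.isSymmSndFDerivAt (by simp) e2 e3

lemma pd2_congr (hfg : f =ᶠ[nhds q] g) : pd2 f q = pd2 g q :=
  (hfg.comp_tendsto (hline2 q.1 q.2.2 q.2.1).continuousAt).deriv_eq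
lemma pd3_congr (hfg : f =ᶠ[nhds q] g) : pd3 f q = pd3 g q :=
  (hfg.comp_tendsto (hline3 q.1 q.2.1 q.2.2).continuousAt).deriv_eq

lemma pd1_mul3 (df : DifferentiableAt ℝ f q) (dg : DifferentiableAt ℝ g q)
    (dh : DifferentiableAt ℝ h q) :
    pd1 (fun x => f x * g x * h x) q
      = (pd1 f q * g q + f q * pd1 g q) * h q + f q * g q * pd1 h q :=
  (((hd1 df).mul (hd1 dg)).mul (hd1 dh)).deriv
lemma pd2_mul3 (df : DifferentiableAt ℝ f q) (dg : DifferentiableAt ℝ g q)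
    (dh : DifferentiableAt ℝ h q) :
    pd2 (fun x => f x * g x * h x) q
      = (pd2 f q * g q + f q * pd2 g q) * h q + f q * g q * pd2 h q :=
  (((hd2 df).mul (hd2 dg)).mul (hd2 dh)).deriv
lemma pd3_mul3 (df : DifferentiableAt ℝ f q) (dg : DifferentiableAt ℝ g q)
    (dh : DifferentiableAt ℝ h q) :
    pd3 (fun x => f x * g x * h x) q
      = (pd3 f q * g q + f q * pd3 g q) * h q + f q * g q * pd3 h q :=
  (((hd3 df).mul (hd3 dg)).mul (hd3 dh)).deriv

lemma pd1_w (df : DifferentiableAt ℝ f q) (dg : DifferentiableAt ℝ g q)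
    (dh : DifferentiableAt ℝ h q) :
    pd1 (fun x => (1 - f x ^ 2 * g x) * h x) q
      = (-(2 * f q * pd1 f q * g q + f q ^ 2 * pd1 g q)) * h q
        + (1 - f q ^ 2 * g q) * pd1 h q :=
  (((hasDerivAt_const q.1 (1:ℝ)).sub (((hd1 df).fun_pow 2).mul (hd1 dg))).mul
    (hd1 dh)).deriv.trans (by push_cast; simp only [Pi.sub_apply, Pi.mul_apply, Pi.pow_apply]; ring)
lemma pd2_w (df : DifferentiableAt ℝ f q) (dg : DifferentiableAt ℝ g q)
    (dh : DifferentiableAt ℝ h q) :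
    pd2 (fun x => (1 - f x ^ 2 * g x) * h x) q
      = (-(2 * f q * pd2 f q * g q + f q ^ 2 * pd2 g q)) * h q
        + (1 - f q ^ 2 * g q) * pd2 h q :=
  (((hasDerivAt_const q.2.1 (1:ℝ)).sub (((hd2 df).fun_pow 2).mul (hd2 dg))).mul
    (hd2 dh)).deriv.trans (by push_cast; simp only [Pi.sub_apply, Pi.mul_apply, Pi.pow_apply]; ring)
lemma pd3_w (df : DifferentiableAt ℝ f q) (dg : DifferentiableAt ℝ g q)
    (dh : DifferentiableAt ℝ h q) :
    pd3 (fun x => (1 - f x ^ 2 * g x) * h x) q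
      = (-(2 * f q * pd3 f q * g q + f q ^ 2 * pd3 g q)) * h q
        + (1 - f q ^ 2 * g q) * pd3 h q :=
  (((hasDerivAt_const q.2.2 (1:ℝ)).sub (((hd3 df).fun_pow 2).mul (hd3 dg))).mul
    (hd3 dh)).deriv.trans (by push_cast; simp only [Pi.sub_apply, Pi.mul_apply, Pi.pow_apply]; ring)

lemma pd2_Sr (γ : ℝ) (df : DifferentiableAt ℝ f q) (dg : DifferentiableAt ℝ g q)
    (hg0 : g q ≠ 0) :
    pd2 (fun x => f x * g x ^ γ) q
      = pd2 f q * g q ^ γ + f q * (γ * g q ^ (γ - 1) * pd2 g q) :=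
  ((hd2 df).mul ((hd2 dg).rpow_const (Or.inl hg0))).deriv.trans (by ring)
lemma pd3_Sr (γ : ℝ) (df : DifferentiableAt ℝ f q) (dg : DifferentiableAt ℝ g q)
    (hg0 : g q ≠ 0) :
    pd3 (fun x => f x * g x ^ γ) q
      = pd3 f q * g q ^ γ + f q * (γ * g q ^ (γ - 1) * pd3 g q) :=
  ((hd3 df).mul ((hd3 dg).rpow_const (Or.inl hg0))).deriv.trans (by ring)

lemma pd2_Bern (γ : ℝ) {ρ U1 U2 U3 S : R3 → ℝ} (dρ : DifferentiableAt ℝ ρ q)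
    (dU1 : DifferentiableAt ℝ U1 q) (dU2 : DifferentiableAt ℝ U2 q)
    (dU3 : DifferentiableAt ℝ U3 q) (dS : DifferentiableAt ℝ S q) (hρ0 : ρ q ≠ 0) :
    pd2 (Bern γ ρ U1 U2 U3 S) q
      = U1 q * pd2 U1 q + U2 q * pd2 U2 q + U3 q * pd2 U3 q
        + γ / (γ - 1) * (pd2 S q * ρ q ^ (γ - 1)
            + S q * ((γ - 1) * ρ q ^ (γ - 2) * pd2 ρ q)) :=
  ((((((hd2 dU1).fun_pow 2).add ((hd2 dU2).fun_pow 2)).add ((hd2 dU3).fun_pow 2)).div_const 2).add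
    ((((hasDerivAt_const q.2.1 γ).mul (hd2 dS)).mul
      ((hd2 dρ).rpow_const (Or.inl hρ0))).div_const (γ - 1))).deriv.trans
    (by rw [show γ - 1 - 1 = γ - 2 by ring]; push_cast; simp only [Pi.sub_apply, Pi.mul_apply, Pi.pow_apply]; ring)
lemma pd3_Bern (γ : ℝ) {ρ U1 U2 U3 S : R3 → ℝ} (dρ : DifferentiableAt ℝ ρ q)
    (dU1 : DifferentiableAt ℝ U1 q) (dU2 : DifferentiableAt ℝ U2 q)
    (dU3 : DifferentiableAt ℝ U3 q) (dS : DifferentiableAt ℝ S q) (hρ0 : ρ q ≠ 0) :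
    pd3 (Bern γ ρ U1 U2 U3 S) q
      = U1 q * pd3 U1 q + U2 q * pd3 U2 q + U3 q * pd3 U3 q
        + γ / (γ - 1) * (pd3 S q * ρ q ^ (γ - 1)
            + S q * ((γ - 1) * ρ q ^ (γ - 2) * pd3 ρ q)) :=
  ((((((hd3 dU1).fun_pow 2).add ((hd3 dU2).fun_pow 2)).add ((hd3 dU3).fun_pow 2)).div_const 2).add
    ((((hasDerivAt_const q.2.2 γ).mul (hd3 dS)).mul
      ((hd3 dρ).rpow_const (Or.inl hρ0))).div_const (γ - 1))).deriv.trans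
    (by rw [show γ - 1 - 1 = γ - 2 by ring]; push_cast; simp only [Pi.sub_apply, Pi.mul_apply, Pi.pow_apply]; ring)

end Tool

lemma J2pt (γ : ℝ) (ρ U1 U2 U3 S κ : R3 → ℝ) (z : R3)
    (hγ1 : γ - 1 ≠ 0) (hγ0 : γ ≠ 0) (hr : z.1 ≠ 0) (hρ0 : ρ z ≠ 0)
    (hU0 : U1 z ≠ 0) (hS0 : S z ≠ 0)
    (dρ : DifferentiableAt ℝ ρ z) (dU1 : DifferentiableAt ℝ U1 z)
    (dU2 : DifferentiableAt ℝ U2 z) (dU3 : DifferentiableAt ℝ U3 z)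
    (dS : DifferentiableAt ℝ S z) (dκ : DifferentiableAt ℝ κ z)
    (hmom : convD U1 U2 U3 U3 z + (1 / ρ z) * pd3 (fun q => S q * ρ q ^ γ) z
      = κ z * U2 z * ((1 / z.1) * pd2 (fun q => κ q * ρ q * U3 q) z
            - pd3 (fun q => κ q * ρ q * U2 q) z)
        - κ z * U1 z * (pd3 (fun q => κ q * ρ q * U1 q) z
            - pd1 (fun q => κ q * ρ q * U3 q) z))
    (hκt : convD U1 U2 U3 κ z = 0) :
    mJ2 ρ U1 U3 κ z = U2 z / U1 z * mJ1 ρ U2 U3 κ z + 1 / U1 z * pd3 (Bern γ ρ U1 U2 U3 S) z - (Bern γ ρ U1 U2 U3 S z - (U1 z ^ 2 + U2 z ^ 2 + U3 z ^ 2) / 2) / (γ * S z * U1 z) * pd3 S z - κ z * ρ z * (U1 z ^ 2 + U2 z ^ 2 + U3 z ^ 2) / U1 z * pd3 κ z := by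
  have hg2 : ρ z ^ (γ - 1) = ρ z ^ (γ - 2) * ρ z := by
    conv_lhs => rw [show γ - 1 = γ - 2 + 1 by ring]
    rw [Real.rpow_add_one hρ0]
  have hg1 : ρ z ^ γ = ρ z ^ (γ - 2) * ρ z * ρ z := by
    conv_lhs => rw [show γ = γ - 2 + 1 + 1 by ring]
    rw [Real.rpow_add_one hρ0, Real.rpow_add_one hρ0]
  simp only [mJ2, mJ1, convD] at *
  rw [Tool.pd3_Sr γ dS dρ hρ0, Tool.pd2_mul3 dκ dρ dU3, Tool.pd3_mul3 dκ dρ dU2,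
    Tool.pd3_mul3 dκ dρ dU1, Tool.pd1_mul3 dκ dρ dU3] at hmom
  rw [Tool.pd3_w dκ dρ dU1, Tool.pd1_w dκ dρ dU3, Tool.pd2_w dκ dρ dU3,
    Tool.pd3_w dκ dρ dU2, Tool.pd3_Bern γ dρ dU1 dU2 dU3 dS hρ0]
  simp only [Bern]
  simp only [hg1, hg2] at hmom ⊢
  linear_combination (norm := (field_simp; ring))
    (-(1 / U1 z)) * hmom + (κ z * ρ z * U3 z / U1 z) * hκt

lemma J3pt (γ : ℝ) (ρ U1 U2 U3 S κ : R3 → ℝ) (z : R3)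
    (hγ1 : γ - 1 ≠ 0) (hγ0 : γ ≠ 0) (hr : z.1 ≠ 0) (hρ0 : ρ z ≠ 0)
    (hU0 : U1 z ≠ 0) (hS0 : S z ≠ 0)
    (dρ : DifferentiableAt ℝ ρ z) (dU1 : DifferentiableAt ℝ U1 z)
    (dU2 : DifferentiableAt ℝ U2 z) (dU3 : DifferentiableAt ℝ U3 z)
    (dS : DifferentiableAt ℝ S z) (dκ : DifferentiableAt ℝ κ z)
    (hmom : convD U1 U2 U3 U2 z + (1 / (z.1 * ρ z)) * pd2 (fun q => S q * ρ q ^ γ) z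
        + U1 z * U2 z / z.1
      = κ z * U1 z * (pd1 (fun q => κ q * ρ q * U2 q) z + κ z * ρ z * U2 z / z.1
            - (1 / z.1) * pd2 (fun q => κ q * ρ q * U1 q) z)
        - κ z * U3 z * ((1 / z.1) * pd2 (fun q => κ q * ρ q * U3 q) z
            - pd3 (fun q => κ q * ρ q * U2 q) z))
    (hκt : convD U1 U2 U3 κ z = 0) :
    mJ3 ρ U1 U2 κ z = U3 z / U1 z * mJ1 ρ U2 U3 κ z - 1 / U1 z * (1 / z.1 * pd2 (Bern γ ρ U1 U2 U3 S) z) + (Bern γ ρ U1 U2 U3 S z - (U1 z ^ 2 + U2 z ^ 2 + U3 z ^ 2) / 2) / (γ * S z * U1 z) * (1 / z.1 * pd2 S z) + κ z * ρ z * (U1 z ^ 2 + U2 z ^ 2 + U3 z ^ 2) / U1 z * (1 / z.1 * pd2 κ z) := by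
  have hg2 : ρ z ^ (γ - 1) = ρ z ^ (γ - 2) * ρ z := by
    conv_lhs => rw [show γ - 1 = γ - 2 + 1 by ring]
    rw [Real.rpow_add_one hρ0]
  have hg1 : ρ z ^ γ = ρ z ^ (γ - 2) * ρ z * ρ z := by
    conv_lhs => rw [show γ = γ - 2 + 1 + 1 by ring]
    rw [Real.rpow_add_one hρ0, Real.rpow_add_one hρ0]
  simp only [mJ3, mJ1, convD] at *
  rw [Tool.pd2_Sr γ dS dρ hρ0, Tool.pd1_mul3 dκ dρ dU2, Tool.pd2_mul3 dκ dρ dU1,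
    Tool.pd2_mul3 dκ dρ dU3, Tool.pd3_mul3 dκ dρ dU2] at hmom
  rw [Tool.pd1_w dκ dρ dU2, Tool.pd2_w dκ dρ dU1, Tool.pd2_w dκ dρ dU3,
    Tool.pd3_w dκ dρ dU2, Tool.pd2_Bern γ dρ dU1 dU2 dU3 dS hρ0]
  simp only [Bern]
  simp only [hg1, hg2] at hmom ⊢
  linear_combination (norm := (field_simp; ring))
    (1 / U1 z) * hmom - (κ z * ρ z * U2 z / U1 z) * hκt
/-- For a C² solution of the cylindrical steady aligned MHD system with `ρ > 0` and
`U₁ > 0`, the first component of the modified vorticity satisfies the first-order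
transport equation (2.4) of the paper. -/

theorem modified_vorticity_J1_transport
    (γ r1 r2 θ0 : ℝ) (hγ : 1 < γ) (hr1 : 0 < r1) (hr12 : r1 < r2)
    (hθ0 : 0 < θ0) (hθ0' : θ0 < Real.pi / 2)
    (ρ U1 U2 U3 S κ : R3 → ℝ)
    (hreg : ContDiffOn ℝ 2 ρ (Cyl r1 r2 θ0) ∧ ContDiffOn ℝ 2 U1 (Cyl r1 r2 θ0) ∧
      ContDiffOn ℝ 2 U2 (Cyl r1 r2 θ0) ∧ ContDiffOn ℝ 2 U3 (Cyl r1 r2 θ0) ∧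
      ContDiffOn ℝ 2 S (Cyl r1 r2 θ0) ∧ ContDiffOn ℝ 2 κ (Cyl r1 r2 θ0))
    (hρ : ∀ p ∈ Cyl r1 r2 θ0, 0 < ρ p) (hU1 : ∀ p ∈ Cyl r1 r2 θ0, 0 < U1 p)
    (hS : ∀ p ∈ Cyl r1 r2 θ0, 0 < S p)
    (hsol : ∀ p ∈ Cyl r1 r2 θ0, CylMHD γ ρ U1 U2 U3 S κ p) :
    ∀ p ∈ Cyl r1 r2 θ0,
      pd1 (mJ1 ρ U2 U3 κ) p + U2 p / U1 p * ((1 / p.1) * pd2 (mJ1 ρ U2 U3 κ) p)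
        + U3 p / U1 p * pd3 (mJ1 ρ U2 U3 κ) p
        + (1 / p.1 + (1 / p.1) * pd2 (fun q => U2 q / U1 q) p
            + pd3 (fun q => U3 q / U1 q) p) * mJ1 ρ U2 U3 κ p
        + (1 / p.1) * pd2 (fun q => 1 / U1 q) p * pd3 (Bern γ ρ U1 U2 U3 S) p
        - pd3 (fun q => 1 / U1 q) p * ((1 / p.1) * pd2 (Bern γ ρ U1 U2 U3 S) p)
        - (1 / p.1) * pd2 (fun q =>
            (Bern γ ρ U1 U2 U3 S q - (U1 q ^ 2 + U2 q ^ 2 + U3 q ^ 2) / 2)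
              / (γ * S q * U1 q)) p * pd3 S p
        + pd3 (fun q =>
            (Bern γ ρ U1 U2 U3 S q - (U1 q ^ 2 + U2 q ^ 2 + U3 q ^ 2) / 2)
              / (γ * S q * U1 q)) p * ((1 / p.1) * pd2 S p)
        - (1 / p.1) * pd2 (fun q =>
            κ q * ρ q * (U1 q ^ 2 + U2 q ^ 2 + U3 q ^ 2) / U1 q) p * pd3 κ p
        + pd3 (fun q =>
            κ q * ρ q * (U1 q ^ 2 + U2 q ^ 2 + U3 q ^ 2) / U1 q) p
              * ((1 / p.1) * pd2 κ p) = 0 := by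
  obtain ⟨hρr, hU1r, hU2r, hU3r, hSr, hκr⟩ := hreg
  have hop : IsOpen (Cyl r1 r2 θ0) := by
    unfold Cyl; exact isOpen_Ioo.prod (isOpen_Ioo.prod isOpen_Ioo)
  have hγ1 : γ - 1 ≠ 0 := sub_ne_zero.mpr (ne_of_gt hγ)
  have hγ0 : γ ≠ 0 := ne_of_gt (lt_trans zero_lt_one hγ)
  have hr0 : ∀ q ∈ Cyl r1 r2 θ0, q.1 ≠ 0 := fun q hq => ne_of_gt (lt_trans hr1 hq.1.1)
  have hC : ∀ {f : R3 → ℝ}, ContDiffOn ℝ 2 f (Cyl r1 r2 θ0) →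
      ∀ {q : R3}, q ∈ Cyl r1 r2 θ0 → ContDiffAt ℝ 2 f q :=
    fun hf _ hq => hf.contDiffAt (hop.mem_nhds hq)
  have hJ2 : ∀ q ∈ Cyl r1 r2 θ0, mJ2 ρ U1 U3 κ q = U2 q / U1 q * mJ1 ρ U2 U3 κ q + 1 / U1 q * pd3 (Bern γ ρ U1 U2 U3 S) q - (Bern γ ρ U1 U2 U3 S q - (U1 q ^ 2 + U2 q ^ 2 + U3 q ^ 2) / 2) / (γ * S q * U1 q) * pd3 S q - κ q * ρ q * (U1 q ^ 2 + U2 q ^ 2 + U3 q ^ 2) / U1 q * pd3 κ q := by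
    intro q hq
    exact J2pt γ ρ U1 U2 U3 S κ q hγ1 hγ0 (hr0 q hq) (ne_of_gt (hρ q hq))
      (ne_of_gt (hU1 q hq)) (ne_of_gt (hS q hq))
      ((hC hρr hq).differentiableAt two_ne_zero)
      ((hC hU1r hq).differentiableAt two_ne_zero)
      ((hC hU2r hq).differentiableAt two_ne_zero)
      ((hC hU3r hq).differentiableAt two_ne_zero)
      ((hC hSr hq).differentiableAt two_ne_zero)
      ((hC hκr hq).differentiableAt two_ne_zero)
      (hsol q hq).2.2.2.1 (hsol q hq).2.2.2.2.2
  have hJ3 : ∀ q ∈ Cyl r1 r2 θ0, mJ3 ρ U1 U2 κ q = U3 q / U1 q * mJ1 ρ U2 U3 κ q - 1 / U1 q * (1 / q.1 * pd2 (Bern γ ρ U1 U2 U3 S) q) + (Bern γ ρ U1 U2 U3 S q - (U1 q ^ 2 + U2 q ^ 2 + U3 q ^ 2) / 2) / (γ * S q * U1 q) * (1 / q.1 * pd2 S q) + κ q * ρ q * (U1 q ^ 2 + U2 q ^ 2 + U3 q ^ 2) / U1 q * (1 / q.1 * pd2 κ q) := by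
    intro q hq
    exact J3pt γ ρ U1 U2 U3 S κ q hγ1 hγ0 (hr0 q hq) (ne_of_gt (hρ q hq))
      (ne_of_gt (hU1 q hq)) (ne_of_gt (hS q hq))
      ((hC hρr hq).differentiableAt two_ne_zero)
      ((hC hU1r hq).differentiableAt two_ne_zero)
      ((hC hU2r hq).differentiableAt two_ne_zero)
      ((hC hU3r hq).differentiableAt two_ne_zero)
      ((hC hSr hq).differentiableAt two_ne_zero)
      ((hC hκr hq).differentiableAt two_ne_zero)
      (hsol q hq).2.2.1 (hsol q hq).2.2.2.2.2
  intro p hp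
  have hrne : p.1 ≠ 0 := hr0 p hp
  have hρne : ρ p ≠ 0 := ne_of_gt (hρ p hp)
  have hU1ne : U1 p ≠ 0 := ne_of_gt (hU1 p hp)
  have hSne : S p ≠ 0 := ne_of_gt (hS p hp)
  have hρC := hC hρr hp
  have hU1C := hC hU1r hp
  have hU2C := hC hU2r hp
  have hU3C := hC hU3r hp
  have hSC := hC hSr hp
  have hκC := hC hκr hp
  have dρ := hρC.differentiableAt two_ne_zero
  have dU1 := hU1C.differentiableAt two_ne_zero
  have dU2 := hU2C.differentiableAt two_ne_zero
  have dU3 := hU3C.differentiableAt two_ne_zero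
  have dS := hSC.differentiableAt two_ne_zero
  have dκ := hκC.differentiableAt two_ne_zero
  have hw1C : ContDiffAt ℝ 2 (fun x => (1 - κ x ^ 2 * ρ x) * U1 x) p :=
    (contDiffAt_const.sub ((hκC.pow 2).mul hρC)).mul hU1C
  have hw2C : ContDiffAt ℝ 2 (fun x => (1 - κ x ^ 2 * ρ x) * U2 x) p :=
    (contDiffAt_const.sub ((hκC.pow 2).mul hρC)).mul hU2C
  have hw3C : ContDiffAt ℝ 2 (fun x => (1 - κ x ^ 2 * ρ x) * U3 x) p :=
    (contDiffAt_const.sub ((hκC.pow 2).mul hρC)).mul hU3C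
  have hBC : ContDiffAt ℝ 2 (Bern γ ρ U1 U2 U3 S) p := by
    have hrp : ContDiffAt ℝ 2 (fun x : ℝ => x ^ (γ - 1)) (ρ p) :=
      Real.contDiffAt_rpow_const_of_ne hρne
    exact ((((hU1C.pow 2).add (hU2C.pow 2)).add (hU3C.pow 2)).div_const 2).add
      (((contDiffAt_const.mul hSC).mul (hrp.comp p hρC)).div_const (γ - 1))
  -- divergence-free identity for J
  have dpd2w3 := Tool.pd2_diffAt hw3C
  have dpd3w2 := Tool.pd3_diffAt hw2C
  have dpd3w1 := Tool.pd3_diffAt hw1C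
  have dpd1w3 := Tool.pd1_diffAt hw3C
  have dpd1w2 := Tool.pd1_diffAt hw2C
  have dpd2w1 := Tool.pd2_diffAt hw1C
  have dw2 : DifferentiableAt ℝ (fun x => (1 - κ x ^ 2 * ρ x) * U2 x) p := hw2C.differentiableAt two_ne_zero
  have h1 : pd1 (mJ1 ρ U2 U3 κ) p
      = -(1 / p.1 ^ 2) * pd2 (fun x => (1 - κ x ^ 2 * ρ x) * U3 x) p + 1 / p.1 * pd1 (pd2 (fun x => (1 - κ x ^ 2 * ρ x) * U3 x)) p
        - pd1 (pd3 (fun x => (1 - κ x ^ 2 * ρ x) * U2 x)) p := by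
    have hinv : HasDerivAt (fun s : ℝ => 1 / s) (-(1 / p.1 ^ 2)) p.1 := by
      simpa [one_div] using hasDerivAt_inv hrne
    exact ((hinv.mul (Tool.hd1 dpd2w3)).sub (Tool.hd1 dpd3w2)).deriv.trans (by ring)
  have h2 : pd2 (mJ2 ρ U1 U3 κ) p = pd2 (pd3 (fun x => (1 - κ x ^ 2 * ρ x) * U1 x)) p - pd2 (pd1 (fun x => (1 - κ x ^ 2 * ρ x) * U3 x)) p :=
    ((Tool.hd2 dpd3w1).sub (Tool.hd2 dpd1w3)).deriv
  have h3 : pd3 (mJ3 ρ U1 U2 κ) p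
      = pd3 (pd1 (fun x => (1 - κ x ^ 2 * ρ x) * U2 x)) p + pd3 (fun x => (1 - κ x ^ 2 * ρ x) * U2 x) p / p.1 - 1 / p.1 * pd3 (pd2 (fun x => (1 - κ x ^ 2 * ρ x) * U1 x)) p :=
    (((Tool.hd3 dpd1w2).add ((Tool.hd3 dw2).div_const p.1)).sub
      ((Tool.hd3 dpd2w1).const_mul (1 / p.1))).deriv
  have hc1 : pd1 (pd2 (fun x => (1 - κ x ^ 2 * ρ x) * U3 x)) p = pd2 (pd1 (fun x => (1 - κ x ^ 2 * ρ x) * U3 x)) p := Tool.pd12_comm hw3C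
  have hc2 : pd1 (pd3 (fun x => (1 - κ x ^ 2 * ρ x) * U2 x)) p = pd3 (pd1 (fun x => (1 - κ x ^ 2 * ρ x) * U2 x)) p := Tool.pd13_comm hw2C
  have hc3 : pd2 (pd3 (fun x => (1 - κ x ^ 2 * ρ x) * U1 x)) p = pd3 (pd2 (fun x => (1 - κ x ^ 2 * ρ x) * U1 x)) p := Tool.pd23_comm hw1C
  have hJ1val : mJ1 ρ U2 U3 κ p = 1 / p.1 * pd2 (fun x => (1 - κ x ^ 2 * ρ x) * U3 x) p - pd3 (fun x => (1 - κ x ^ 2 * ρ x) * U2 x) p := rfl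
  have hdiv : pd1 (mJ1 ρ U2 U3 κ) p + mJ1 ρ U2 U3 κ p / p.1
      + 1 / p.1 * pd2 (mJ2 ρ U1 U3 κ) p + pd3 (mJ3 ρ U1 U2 κ) p = 0 := by
    linear_combination h1 + (1 / p.1) * h2 + h3 + (1 / p.1) * hJ1val
      + (1 / p.1) * hc1 - hc2 + (1 / p.1) * hc3
  -- substitute mJ2 and mJ3 by their expressions
  have hpd2J2 : pd2 (mJ2 ρ U1 U3 κ) p = pd2 (fun x => U2 x / U1 x * mJ1 ρ U2 U3 κ x + 1 / U1 x * pd3 (Bern γ ρ U1 U2 U3 S) x - (Bern γ ρ U1 U2 U3 S x - (U1 x ^ 2 + U2 x ^ 2 + U3 x ^ 2) / 2) / (γ * S x * U1 x) * pd3 S x - κ x * ρ x * (U1 x ^ 2 + U2 x ^ 2 + U3 x ^ 2) / U1 x * pd3 κ x) p :=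
    Tool.pd2_congr (Filter.eventuallyEq_of_mem (hop.mem_nhds hp) fun q hq => hJ2 q hq)
  have hpd3J3 : pd3 (mJ3 ρ U1 U2 κ) p = pd3 (fun x => U3 x / U1 x * mJ1 ρ U2 U3 κ x - 1 / U1 x * (1 / x.1 * pd2 (Bern γ ρ U1 U2 U3 S) x) + (Bern γ ρ U1 U2 U3 S x - (U1 x ^ 2 + U2 x ^ 2 + U3 x ^ 2) / 2) / (γ * S x * U1 x) * (1 / x.1 * pd2 S x) + κ x * ρ x * (U1 x ^ 2 + U2 x ^ 2 + U3 x ^ 2) / U1 x * (1 / x.1 * pd2 κ x)) p :=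
    Tool.pd3_congr (Filter.eventuallyEq_of_mem (hop.mem_nhds hp) fun q hq => hJ3 q hq)
  -- differentiability of the pieces
  have hden : γ * S p * U1 p ≠ 0 := mul_ne_zero (mul_ne_zero hγ0 hSne) hU1ne
  have dsum : DifferentiableAt ℝ (fun x => U1 x ^ 2 + U2 x ^ 2 + U3 x ^ 2) p :=
    ((dU1.pow 2).add (dU2.pow 2)).add (dU3.pow 2)
  have dfst : DifferentiableAt ℝ (fun x : R3 => x.1) p := differentiableAt_fst
  have dinvr : DifferentiableAt ℝ (fun x : R3 => 1 / x.1) p := by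
    simp only [one_div]
    exact (differentiableAt_inv hrne).comp p dfst
  have dJ1 : DifferentiableAt ℝ (mJ1 ρ U2 U3 κ) p := (dinvr.mul dpd2w3).sub dpd3w2
  have dUU : DifferentiableAt ℝ (fun x => U2 x / U1 x) p := by
    simp only [div_eq_mul_inv]; exact dU2.mul (dU1.inv hU1ne)
  have dWU : DifferentiableAt ℝ (fun x => U3 x / U1 x) p := by
    simp only [div_eq_mul_inv]; exact dU3.mul (dU1.inv hU1ne)
  have dinvU : DifferentiableAt ℝ (fun x => 1 / U1 x) p := by
    simp only [one_div]; exact dU1.inv hU1ne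
  have dBf : DifferentiableAt ℝ (Bern γ ρ U1 U2 U3 S) p :=
    hBC.differentiableAt two_ne_zero
  have dG : DifferentiableAt ℝ (fun x => (Bern γ ρ U1 U2 U3 S x - (U1 x ^ 2 + U2 x ^ 2 + U3 x ^ 2) / 2) / (γ * S x * U1 x)) p :=
    by simp only [div_eq_mul_inv]
       exact (dBf.sub (dsum.mul (differentiableAt_const _))).mul
         ((((differentiableAt_const γ).mul dS).mul dU1).inv hden)
  have dH : DifferentiableAt ℝ (fun x => κ x * ρ x * (U1 x ^ 2 + U2 x ^ 2 + U3 x ^ 2) / U1 x) p := by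
    simp only [div_eq_mul_inv]; exact ((dκ.mul dρ).mul dsum).mul (dU1.inv hU1ne)
  have dB3 := Tool.pd3_diffAt hBC
  have dB2 := Tool.pd2_diffAt hBC
  have dS3 := Tool.pd3_diffAt hSC
  have dS2 := Tool.pd2_diffAt hSC
  have dκ3 := Tool.pd3_diffAt hκC
  have dκ2 := Tool.pd2_diffAt hκC
  -- expansions of the substituted derivatives
  have hE2x : pd2 (fun x => U2 x / U1 x * mJ1 ρ U2 U3 κ x + 1 / U1 x * pd3 (Bern γ ρ U1 U2 U3 S) x - (Bern γ ρ U1 U2 U3 S x - (U1 x ^ 2 + U2 x ^ 2 + U3 x ^ 2) / 2) / (γ * S x * U1 x) * pd3 S x - κ x * ρ x * (U1 x ^ 2 + U2 x ^ 2 + U3 x ^ 2) / U1 x * pd3 κ x) p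
      = pd2 (fun x => U2 x / U1 x) p * mJ1 ρ U2 U3 κ p
        + U2 p / U1 p * pd2 (mJ1 ρ U2 U3 κ) p
        + (pd2 (fun x => 1 / U1 x) p * pd3 (Bern γ ρ U1 U2 U3 S) p
            + 1 / U1 p * pd2 (pd3 (Bern γ ρ U1 U2 U3 S)) p)
        - (pd2 (fun x => (Bern γ ρ U1 U2 U3 S x - (U1 x ^ 2 + U2 x ^ 2 + U3 x ^ 2) / 2) / (γ * S x * U1 x)) p * pd3 S p + ((Bern γ ρ U1 U2 U3 S p - (U1 p ^ 2 + U2 p ^ 2 + U3 p ^ 2) / 2) / (γ * S p * U1 p)) * pd2 (pd3 S) p)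
        - (pd2 (fun x => κ x * ρ x * (U1 x ^ 2 + U2 x ^ 2 + U3 x ^ 2) / U1 x) p * pd3 κ p + (κ p * ρ p * (U1 p ^ 2 + U2 p ^ 2 + U3 p ^ 2) / U1 p) * pd2 (pd3 κ) p) :=
    ((((Tool.hd2 dUU).mul (Tool.hd2 dJ1)).add
        ((Tool.hd2 dinvU).mul (Tool.hd2 dB3))).sub
      ((Tool.hd2 dG).mul (Tool.hd2 dS3))).sub
        ((Tool.hd2 dH).mul (Tool.hd2 dκ3)) |>.deriv.trans (by ring)
  have hE3x : pd3 (fun x => U3 x / U1 x * mJ1 ρ U2 U3 κ x - 1 / U1 x * (1 / x.1 * pd2 (Bern γ ρ U1 U2 U3 S) x) + (Bern γ ρ U1 U2 U3 S x - (U1 x ^ 2 + U2 x ^ 2 + U3 x ^ 2) / 2) / (γ * S x * U1 x) * (1 / x.1 * pd2 S x) + κ x * ρ x * (U1 x ^ 2 + U2 x ^ 2 + U3 x ^ 2) / U1 x * (1 / x.1 * pd2 κ x)) p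
      = pd3 (fun x => U3 x / U1 x) p * mJ1 ρ U2 U3 κ p
        + U3 p / U1 p * pd3 (mJ1 ρ U2 U3 κ) p
        - (pd3 (fun x => 1 / U1 x) p * (1 / p.1 * pd2 (Bern γ ρ U1 U2 U3 S) p)
            + 1 / U1 p * (1 / p.1 * pd3 (pd2 (Bern γ ρ U1 U2 U3 S)) p))
        + (pd3 (fun x => (Bern γ ρ U1 U2 U3 S x - (U1 x ^ 2 + U2 x ^ 2 + U3 x ^ 2) / 2) / (γ * S x * U1 x)) p * (1 / p.1 * pd2 S p)
            + ((Bern γ ρ U1 U2 U3 S p - (U1 p ^ 2 + U2 p ^ 2 + U3 p ^ 2) / 2) / (γ * S p * U1 p)) * (1 / p.1 * pd3 (pd2 S) p))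
        + (pd3 (fun x => κ x * ρ x * (U1 x ^ 2 + U2 x ^ 2 + U3 x ^ 2) / U1 x) p * (1 / p.1 * pd2 κ p)
            + (κ p * ρ p * (U1 p ^ 2 + U2 p ^ 2 + U3 p ^ 2) / U1 p) * (1 / p.1 * pd3 (pd2 κ) p)) :=
    ((((Tool.hd3 dWU).mul (Tool.hd3 dJ1)).sub
        ((Tool.hd3 dinvU).mul ((Tool.hd3 dB2).const_mul (1 / p.1)))).add
      ((Tool.hd3 dG).mul ((Tool.hd3 dS2).const_mul (1 / p.1)))).add
        ((Tool.hd3 dH).mul ((Tool.hd3 dκ2).const_mul (1 / p.1))) |>.deriv.trans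
      (by ring)
  have hcB : pd2 (pd3 (Bern γ ρ U1 U2 U3 S)) p = pd3 (pd2 (Bern γ ρ U1 U2 U3 S)) p := Tool.pd23_comm hBC
  have hcS : pd2 (pd3 S) p = pd3 (pd2 S) p := Tool.pd23_comm hSC
  have hcκ : pd2 (pd3 κ) p = pd3 (pd2 κ) p := Tool.pd23_comm hκC
  linear_combination hdiv - (1 / p.1) * hpd2J2 - (1 / p.1) * hE2x - hpd3J3 - hE3x
    - (1 / U1 p * (1 / p.1)) * hcB + (((Bern γ ρ U1 U2 U3 S p - (U1 p ^ 2 + U2 p ^ 2 + U3 p ^ 2) / 2) / (γ * S p * U1 p)) * (1 / p.1)) * hcS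
    + ((κ p * ρ p * (U1 p ^ 2 + U2 p ^ 2 + U3 p ^ 2) / U1 p) * (1 / p.1)) * hcκ
end
end

section
/- Let (ρ, u, S, κ) be a C² solution of the cylindrical steady aligned MHD system on Ω with ρ > 0. Then the velocity components satisfy the scalar equation (c² − U₁²)∂_rU₁ + (c² − U₂²)(1/r)∂_θU₂ + (c² − U₃²)∂_{x₃}U₃ + c²U₁/r = U₁(U₂∂_rU₂ + U₃∂_rU₃) + U₂(U₁(1/r)∂_θU₁ + U₃(1/r)∂_θU₃) + U₃(U₁∂_{x₃}U₁ + U₂∂_{x₃}U₂), where c² = c²(B, |U|²) = (γ−1)(B − |U|²/2) and ρ = ((γ−1)/(γS))^{1/(γ−1)}(B − |U|²/2)^{1/(γ−1)}. -/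
noncomputable section

lemma hasDerivAt_pd1 (f : R3 → ℝ) (p : R3) (hf : DifferentiableAt ℝ f p) :
    HasDerivAt (fun s => f (s, p.2.1, p.2.2)) (pd1 f p) p.1 := by
  have hι : DifferentiableAt ℝ (fun s : ℝ => ((s, p.2.1, p.2.2) : R3)) p.1 :=
    differentiableAt_id.prodMk (differentiableAt_const _)
  have h : DifferentiableAt ℝ (fun s => f (s, p.2.1, p.2.2)) p.1 := hf.comp p.1 hι
  exact h.hasDerivAt

lemma hasDerivAt_pd2 (f : R3 → ℝ) (p : R3) (hf : DifferentiableAt ℝ f p) :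
    HasDerivAt (fun s => f (p.1, s, p.2.2)) (pd2 f p) p.2.1 := by
  have hι : DifferentiableAt ℝ (fun s : ℝ => ((p.1, s, p.2.2) : R3)) p.2.1 :=
    (differentiableAt_const _).prodMk (differentiableAt_id.prodMk (differentiableAt_const _))
  have h : DifferentiableAt ℝ (fun s => f (p.1, s, p.2.2)) p.2.1 := hf.comp p.2.1 hι
  exact h.hasDerivAt

lemma hasDerivAt_pd3 (f : R3 → ℝ) (p : R3) (hf : DifferentiableAt ℝ f p) :
    HasDerivAt (fun s => f (p.1, p.2.1, s)) (pd3 f p) p.2.2 := by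
  have hι : DifferentiableAt ℝ (fun s : ℝ => ((p.1, p.2.1, s) : R3)) p.2.2 :=
    (differentiableAt_const _).prodMk ((differentiableAt_const _).prodMk differentiableAt_id)
  have h : DifferentiableAt ℝ (fun s => f (p.1, p.2.1, s)) p.2.2 := hf.comp p.2.2 hι
  exact h.hasDerivAt

set_option maxHeartbeats 2000000 in
/-- For a C² solution of the cylindrical steady aligned MHD system with `ρ > 0`,
the velocity field satisfies the scalar deformation equation (2.6) of the paper,
with `c² = (γ-1)(B - |U|²/2)`. -/
theorem deformation_scalar_equation
    (γ r1 r2 θ0 : ℝ) (hγ : 1 < γ) (hr1 : 0 < r1) (hr12 : r1 < r2)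
    (hθ0 : 0 < θ0) (hθ0' : θ0 < Real.pi / 2)
    (ρ U1 U2 U3 S κ : R3 → ℝ)
    (hreg : ContDiffOn ℝ 2 ρ (Cyl r1 r2 θ0) ∧ ContDiffOn ℝ 2 U1 (Cyl r1 r2 θ0) ∧
      ContDiffOn ℝ 2 U2 (Cyl r1 r2 θ0) ∧ ContDiffOn ℝ 2 U3 (Cyl r1 r2 θ0) ∧
      ContDiffOn ℝ 2 S (Cyl r1 r2 θ0) ∧ ContDiffOn ℝ 2 κ (Cyl r1 r2 θ0))
    (hρ : ∀ p ∈ Cyl r1 r2 θ0, 0 < ρ p) (hS : ∀ p ∈ Cyl r1 r2 θ0, 0 < S p)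
    (hsol : ∀ p ∈ Cyl r1 r2 θ0, CylMHD γ ρ U1 U2 U3 S κ p) :
    ∀ p ∈ Cyl r1 r2 θ0,
      ((γ - 1) * (Bern γ ρ U1 U2 U3 S p - (U1 p ^ 2 + U2 p ^ 2 + U3 p ^ 2) / 2)
          - U1 p ^ 2) * pd1 U1 p
        + ((γ - 1) * (Bern γ ρ U1 U2 U3 S p - (U1 p ^ 2 + U2 p ^ 2 + U3 p ^ 2) / 2)
          - U2 p ^ 2) * ((1 / p.1) * pd2 U2 p)
        + ((γ - 1) * (Bern γ ρ U1 U2 U3 S p - (U1 p ^ 2 + U2 p ^ 2 + U3 p ^ 2) / 2)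
          - U3 p ^ 2) * pd3 U3 p
        + (γ - 1) * (Bern γ ρ U1 U2 U3 S p - (U1 p ^ 2 + U2 p ^ 2 + U3 p ^ 2) / 2)
            * U1 p / p.1
      = U1 p * (U2 p * pd1 U2 p + U3 p * pd1 U3 p)
        + U2 p * (U1 p * ((1 / p.1) * pd2 U1 p) + U3 p * ((1 / p.1) * pd2 U3 p))
        + U3 p * (U1 p * pd3 U1 p + U2 p * pd3 U2 p) := by

  intro p hp
  obtain ⟨hρd, hU1d, hU2d, hU3d, hSd, hκd⟩ := hreg
  have hopen : IsOpen (Cyl r1 r2 θ0) := by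
    unfold Cyl
    exact isOpen_Ioo.prod (isOpen_Ioo.prod isOpen_Ioo)
  have hmem := hopen.mem_nhds hp
  have h2 : (2 : WithTop ℕ∞) ≠ 0 := by norm_num
  have dρ : DifferentiableAt ℝ ρ p := (hρd.contDiffAt hmem).differentiableAt h2
  have dU1 : DifferentiableAt ℝ U1 p := (hU1d.contDiffAt hmem).differentiableAt h2
  have dU2 : DifferentiableAt ℝ U2 p := (hU2d.contDiffAt hmem).differentiableAt h2
  have dU3 : DifferentiableAt ℝ U3 p := (hU3d.contDiffAt hmem).differentiableAt h2
  have dS : DifferentiableAt ℝ S p := (hSd.contDiffAt hmem).differentiableAt h2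
  have hρ0 : 0 < ρ p := hρ p hp
  have hρn : ρ p ≠ 0 := ne_of_gt hρ0
  have hrn : p.1 ≠ 0 := ne_of_gt (lt_trans hr1 hp.1.1)
  have hγn : γ - 1 ≠ 0 := sub_ne_zero_of_ne (ne_of_gt hγ)
  have hρ1 := hasDerivAt_pd1 ρ p dρ
  have hρ2 := hasDerivAt_pd2 ρ p dρ
  have hρ3 := hasDerivAt_pd3 ρ p dρ
  have hU11 := hasDerivAt_pd1 U1 p dU1
  have hU12 := hasDerivAt_pd2 U1 p dU1
  have hU13 := hasDerivAt_pd3 U1 p dU1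
  have hU21 := hasDerivAt_pd1 U2 p dU2
  have hU22 := hasDerivAt_pd2 U2 p dU2
  have hU23 := hasDerivAt_pd3 U2 p dU2
  have hU31 := hasDerivAt_pd1 U3 p dU3
  have hU32 := hasDerivAt_pd2 U3 p dU3
  have hU33 := hasDerivAt_pd3 U3 p dU3
  have hS1 := hasDerivAt_pd1 S p dS
  have hS2 := hasDerivAt_pd2 S p dS
  have hS3 := hasDerivAt_pd3 S p dS
  have hgam : ρ p ^ γ = ρ p ^ (γ - 1) * ρ p := by
    nth_rewrite 1 [show γ = γ - 1 + 1 by ring]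
    exact Real.rpow_add_one hρn (γ - 1)
  have hg2 : ρ p ^ (γ - 1 - 1) = ρ p ^ (γ - 1) / ρ p := by
    rw [Real.rpow_sub hρ0, Real.rpow_one]
  have hc1 : pd1 (fun q => ρ q * U1 q) p = _ := (hρ1.mul hU11).deriv
  have hc2 : pd2 (fun q => ρ q * U2 q) p = _ := (hρ2.mul hU22).deriv
  have hc3 : pd3 (fun q => ρ q * U3 q) p = _ := (hρ3.mul hU33).deriv
  have hP1 : pd1 (fun q => S q * ρ q ^ γ) p = _ :=
    (hS1.mul (hρ1.rpow_const (Or.inl hρn))).deriv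
  have hP2 : pd2 (fun q => S q * ρ q ^ γ) p = _ :=
    (hS2.mul (hρ2.rpow_const (Or.inl hρn))).deriv
  have hP3 : pd3 (fun q => S q * ρ q ^ γ) p = _ :=
    (hS3.mul (hρ3.rpow_const (Or.inl hρn))).deriv
  rw [hgam] at hP1 hP2 hP3
  have hB1 : pd1 (Bern γ ρ U1 U2 U3 S) p = _ :=
    (((((hU11.pow 2).add (hU21.pow 2)).add (hU31.pow 2)).div_const 2).add
      (((hS1.const_mul γ).mul (hρ1.rpow_const (Or.inl hρn))).div_const (γ - 1))).deriv
  have hB2 : pd2 (Bern γ ρ U1 U2 U3 S) p = _ :=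
    (((((hU12.pow 2).add (hU22.pow 2)).add (hU32.pow 2)).div_const 2).add
      (((hS2.const_mul γ).mul (hρ2.rpow_const (Or.inl hρn))).div_const (γ - 1))).deriv
  have hB3 : pd3 (Bern γ ρ U1 U2 U3 S) p = _ :=
    (((((hU13.pow 2).add (hU23.pow 2)).add (hU33.pow 2)).div_const 2).add
      (((hS3.const_mul γ).mul (hρ3.rpow_const (Or.inl hρn))).div_const (γ - 1))).deriv
  rw [hg2] at hB1 hB2 hB3
  obtain ⟨hcont, hm1, hm2, hm3, hBern, -⟩ := hsol p hp
  simp only [convD] at hm1 hm2 hm3 hBern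
  rw [hc1, hc2, hc3] at hcont
  rw [hP1] at hm1
  rw [hP2] at hm2
  rw [hP3] at hm3
  rw [hB1, hB2, hB3] at hBern
  have hBval : Bern γ ρ U1 U2 U3 S p
      = (U1 p ^ 2 + U2 p ^ 2 + U3 p ^ 2) / 2 + γ * S p * ρ p ^ (γ - 1) / (γ - 1) := rfl
  rw [hBval]
  linear_combination (norm := (field_simp; ring))
    (-γ * U1 p) * hm1 + (-γ * U2 p) * hm2 + (-γ * U3 p) * hm3
    + (γ - 1) * hBern + (γ * S p * ρ p ^ (γ - 1) / ρ p) * hcont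
end
end
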